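/- arXiv:1407.6775 — 5 statements merged into one kernel-verified Lean document; each statement's English description precedes it below -/
import Mathlib

section
/- Let (h,B) be a quadratic Lie algebra over a field F of characteristic 0 and let D1, D2 be invertible skew-symmetric derivations of h. If the double extensions g1 and g2 of h by means of D1 and D2 are i-isomorphic, then there exist an invertible linear map Q : Z(h) → Z(h) and a nonzero λ ∈ F such that Q^{-1} ∘ (D1|_{Z(h)}) ∘ Q = λ · (D2|_{Z(h)}). In particular, D1|_{Z(h)} is diagonalizable if and only if D2|_{Z(h)} is diagonalizable. -/
open LinearMap Module

/-- `B` is invariant: `B([x,y],z) = B(x,[y,z])`. -/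
def LieInvariant {F : Type*} [Field F] {g : Type*} [LieRing g] [LieAlgebra F g]
    (B : LinearMap.BilinForm F g) : Prop :=
  ∀ x y z : g, B ⁅x, y⁆ z = B x ⁅y, z⁆

/-- `B` is symmetric. -/
def BilinSymm {F : Type*} [Field F] {g : Type*} [AddCommGroup g] [Module F g]
    (B : LinearMap.BilinForm F g) : Prop :=
  ∀ x y : g, B x y = B y x

/-- `(g, B)` is a quadratic Lie algebra: `B` nondegenerate, symmetric and invariant
(finite dimensionality is a separate hypothesis). -/
def IsQuadratic {F : Type*} [Field F] {g : Type*} [LieRing g] [LieAlgebra F g]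
    (B : LinearMap.BilinForm F g) : Prop :=
  B.Nondegenerate ∧ BilinSymm B ∧ LieInvariant B

/-- i-isomorphism of quadratic Lie algebras: a Lie algebra isomorphism which is an isometry. -/
def IIsom (F : Type*) [Field F] {g1 g2 : Type*} [LieRing g1] [LieAlgebra F g1]
    [LieRing g2] [LieAlgebra F g2] (B1 : LinearMap.BilinForm F g1)
    (B2 : LinearMap.BilinForm F g2) : Prop :=
  ∃ A : g1 ≃ₗ⁅F⁆ g2, ∀ x y : g1, B2 (A x) (A y) = B1 x y

/-- `D` is a skew-symmetric derivation of `(h, B)`. -/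
def IsSkewDerivation {F : Type*} [Field F] {h : Type*} [LieRing h] [LieAlgebra F h]
    (B : LinearMap.BilinForm F h) (D : h →ₗ[F] h) : Prop :=
  (∀ x y : h, D ⁅x, y⁆ = ⁅D x, y⁆ + ⁅x, D y⁆) ∧ ∀ x y : h, B (D x) y = - B x (D y)

/-- `(g, Bg)` is (a realization of) the double extension of `(h, Bh)` by means of the
skew-symmetric derivation `D`, via the embedding `ι : h → g` and the elements `e, f ∈ g`. -/
structure IsDoubleExtension {F : Type*} [Field F] {h g : Type*} [LieRing h] [LieAlgebra F h]
    [LieRing g] [LieAlgebra F g] (Bh : LinearMap.BilinForm F h) (Bg : LinearMap.BilinForm F g)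
    (D : h →ₗ[F] h) (ι : h →ₗ[F] g) (e f : g) : Prop where
  inj : Function.Injective ι
  spanning : ∀ x : g, ∃ (y : h) (a b : F), x = ι y + a • e + b • f
  bracket_h : ∀ x y : h, ⁅ι x, ι y⁆ = ι ⁅x, y⁆ + (Bh (D x) y) • f
  bracket_e : ∀ x : h, ⁅e, ι x⁆ = ι (D x)
  bracket_f : ∀ x : g, ⁅f, x⁆ = 0
  form_h : ∀ x y : h, Bg (ι x) (ι y) = Bh x y
  form_he : ∀ x : h, Bg (ι x) e = 0
  form_hf : ∀ x : h, Bg (ι x) f = 0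
  form_ee : Bg e e = 0
  form_ff : Bg f f = 0
  form_ef : Bg e f = 1

/-- `(g, B)` is decomposable: it contains a nonzero proper Lie ideal on which `B`
restricts nondegenerately. -/
def IsDecomposable (F : Type*) [Field F] {g : Type*} [LieRing g] [LieAlgebra F g]
    (B : LinearMap.BilinForm F g) : Prop :=
  ∃ I : LieIdeal F g, I ≠ ⊥ ∧ I ≠ ⊤ ∧ ∀ x ∈ I, (∀ y ∈ I, B x y = 0) → x = 0

/-- a linear endomorphism is diagonalizable if there is a basis of eigenvectors. -/
def IsDiagonalizable {F : Type*} [Field F] {M : Type*} [AddCommGroup M] [Module F M]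
    (f : M →ₗ[F] M) : Prop :=
  ∃ (n : ℕ) (b : Basis (Fin n) F M) (mu : Fin n → F), ∀ i, f (b i) = mu i • b i


/-! An i-isomorphism `A : g₁ → g₂` maps the centre of `g₁`, which contains `f₁`, onto the
centre of `g₂`, which is `F f₂` when `h ≠ 0` because `D₂` is invertible; so `A f₁ = μ f₂` with
`μ ≠ 0`. As `A` is an isometry it maps `f₁^⊥ = ι₁(h) ⊕ F f₁` into `ι₂(h) ⊕ F f₂`, and the
`ι₂(h)`-component `φ` of `A ∘ ι₁` is an injective, hence bijective, Lie algebra endomorphism of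
`h`; in particular it preserves `Z(h)`. Writing `A e₁ = ι₂ w + c e₂ + d f₂`, where `c ≠ 0`
because `B(e₁, f₁) = 1`, and applying `A` to `[e₁, ι₁ z] = ι₁ (D₁ z)` for central `z` gives
`φ ∘ D₁ = c • D₂ ∘ φ` on `Z(h)`. -/

section Conjugation

variable {F M N : Type*} [Field F] [AddCommGroup M] [Module F M] [AddCommGroup N] [Module F N]

theorem IsDiagonalizable.of_conj {f : M →ₗ[F] M} {g : N →ₗ[F] N} (Q : N ≃ₗ[F] M) (c : F)
    (hfg : ∀ x, f (Q x) = Q (c • g x)) (hg : IsDiagonalizable g) : IsDiagonalizable f := by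
  obtain ⟨n, b, mu, hb⟩ := hg
  refine ⟨n, b.map Q, fun i => c * mu i, fun i => ?_⟩
  rw [Basis.map_apply, hfg, hb, smul_smul, map_smul]

theorem isDiagonalizable_iff_of_conj {f g : M →ₗ[F] M} (Q : M ≃ₗ[F] M) {c : F} (hc : c ≠ 0)
    (hfg : ∀ z, Q.symm (f (Q z)) = c • g z) : IsDiagonalizable f ↔ IsDiagonalizable g := by
  refine ⟨.of_conj Q.symm c⁻¹ fun x => ?_, .of_conj Q c fun x => ?_⟩
  · have hx := hfg (Q.symm x)
    rw [Q.apply_symm_apply] at hx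
    rw [map_smul, hx, smul_smul, inv_mul_cancel₀ hc, one_smul]
  · rw [← hfg, Q.apply_symm_apply]

theorem exists_linearEquiv_conj_restrict [FiniteDimensional F M] {Z : Submodule F M}
    {f g φ : M →ₗ[F] M} (hf : ∀ x ∈ Z, f x ∈ Z) (hg : ∀ x ∈ Z, g x ∈ Z) (hφ : ∀ x ∈ Z, φ x ∈ Z)
    (hφinj : Function.Injective φ) {c : F} (hfg : ∀ z ∈ Z, φ (f z) = c • g (φ z)) :
    ∃ Q : Z ≃ₗ[F] Z, ∀ z, Q.symm (f.restrict hf (Q z)) = c • g.restrict hg z := by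
  let ψ := LinearEquiv.ofInjectiveEndo (φ.restrict hφ) fun a b hab =>
    Subtype.ext (hφinj (congrArg Subtype.val hab))
  refine ⟨ψ.symm, fun z => ?_⟩
  obtain ⟨z, rfl⟩ := ψ.surjective z
  rw [LinearEquiv.symm_symm, ψ.symm_apply_apply]
  exact Subtype.ext (hfg z z.2)

end Conjugation

section Center

variable {R L L' : Type*} [CommRing R] [LieRing L] [LieAlgebra R L] [LieRing L'] [LieAlgebra R L']

theorem LieAlgebra.map_mem_center_of_derivation {D : L →ₗ[R] L}
    (hD : ∀ x y : L, D ⁅x, y⁆ = ⁅D x, y⁆ + ⁅x, D y⁆) {z : L} (hz : z ∈ center R L) :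
    D z ∈ center R L := by
  rw [LieModule.mem_maxTrivSubmodule] at hz ⊢
  intro y
  simpa [hz, hz (D y)] using (hD y z).symm

theorem LieAlgebra.map_mem_center_of_surjective {φ : L →ₗ[R] L'}
    (hφ : ∀ x y : L, φ ⁅x, y⁆ = ⁅φ x, φ y⁆) (hsurj : Function.Surjective φ) {z : L}
    (hz : z ∈ center R L) : φ z ∈ center R L' := by
  rw [LieModule.mem_maxTrivSubmodule] at hz ⊢
  intro y
  obtain ⟨x, rfl⟩ := hsurj y
  rw [← hφ, hz, map_zero]

end Center

section DoubleExtension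

variable {F h g : Type*} [Field F] [LieRing h] [LieAlgebra F h] [LieRing g] [LieAlgebra F g]
  {Bh : LinearMap.BilinForm F h} {Bg : LinearMap.BilinForm F g} {D : h →ₗ[F] h}
  {ι : h →ₗ[F] g} {e f : g}

def doubleExtensionMap (ι : h →ₗ[F] g) (e f : g) : h × F × F →ₗ[F] g :=
  ι.coprod ((toSpanSingleton F g e).coprod (toSpanSingleton F g f))

theorem doubleExtensionMap_apply (y : h) (a b : F) :
    doubleExtensionMap ι e f (y, a, b) = ι y + a • e + b • f := by
  simp [doubleExtensionMap, add_assoc]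

namespace IsDoubleExtension

theorem f_ne_zero (hde : IsDoubleExtension Bh Bg D ι e f) : f ≠ 0 := by
  rintro rfl
  simpa using hde.form_ef

theorem lie_f (hde : IsDoubleExtension Bh Bg D ι e f) (x : g) : ⁅x, f⁆ = 0 := by
  rw [← lie_skew, hde.bracket_f, neg_zero]

theorem bijective_doubleExtensionMap (hde : IsDoubleExtension Bh Bg D ι e f)
    (hD : Function.Injective D) : Function.Bijective (doubleExtensionMap ι e f) := by
  refine ⟨(injective_iff_map_eq_zero _).mpr ?_, fun u => ?_⟩
  · rintro ⟨y, a, b⟩ H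
    rw [doubleExtensionMap_apply] at H
    have ha : a = 0 := by
      simpa [hde.form_hf, hde.form_ef, hde.form_ff] using congrArg (Bg · f) H
    have hy : y = 0 := by
      have he := congrArg (⁅e, ·⁆) H
      simp only [lie_add, lie_smul, hde.bracket_e, lie_self, hde.lie_f, smul_zero, add_zero,
        lie_zero] at he
      exact hD (hde.inj (by rw [he, map_zero, map_zero]))
    subst ha hy
    have hb : b = 0 := by
      simpa [hde.f_ne_zero] using H
    simp [hb]
  · obtain ⟨y, a, b, rfl⟩ := hde.spanning u
    exact ⟨(y, a, b), doubleExtensionMap_apply y a b⟩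

noncomputable def proj (hde : IsDoubleExtension Bh Bg D ι e f) (hD : Function.Injective D) :
    g →ₗ[F] h :=
  LinearMap.fst F h (F × F) ∘ₗ
    (LinearEquiv.ofBijective _ (hde.bijective_doubleExtensionMap hD)).symm.toLinearMap

theorem proj_apply (hde : IsDoubleExtension Bh Bg D ι e f) (hD : Function.Injective D)
    (y : h) (a b : F) : hde.proj hD (ι y + a • e + b • f) = y := by
  have : (LinearEquiv.ofBijective _ (hde.bijective_doubleExtensionMap hD)).symm
      (ι y + a • e + b • f) = (y, a, b) := by
    rw [LinearEquiv.symm_apply_eq, LinearEquiv.ofBijective_apply, doubleExtensionMap_apply]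
  simp [proj, this]

@[simp]
theorem proj_ι (hde : IsDoubleExtension Bh Bg D ι e f) (hD : Function.Injective D) (y : h) :
    hde.proj hD (ι y) = y := by
  simpa using hde.proj_apply hD y 0 0

@[simp]
theorem proj_f (hde : IsDoubleExtension Bh Bg D ι e f) (hD : Function.Injective D) :
    hde.proj hD f = 0 := by
  simpa using hde.proj_apply hD 0 0 1

theorem exists_eq_add_smul_f (hde : IsDoubleExtension Bh Bg D ι e f) (hD : Function.Injective D)
    {u : g} (hu : Bg u f = 0) : ∃ b : F, u = ι (hde.proj hD u) + b • f := by
  obtain ⟨y, a, b, rfl⟩ := hde.spanning u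
  have ha : a = 0 := by simpa [hde.form_hf, hde.form_ef, hde.form_ff] using hu
  subst ha
  exact ⟨b, by rw [hde.proj_apply, zero_smul, add_zero]⟩

theorem exists_eq_smul_f_of_mem_center [Nontrivial h] (hde : IsDoubleExtension Bh Bg D ι e f)
    (hD : Function.Injective D) {u : g} (hu : u ∈ LieAlgebra.center F g) : ∃ b : F, u = b • f := by
  rw [LieModule.mem_maxTrivSubmodule] at hu
  obtain ⟨y, a, b, rfl⟩ := hde.spanning u
  have hy : y = 0 := by
    have he := hu e
    simp only [lie_add, lie_smul, hde.bracket_e, lie_self, hde.lie_f, smul_zero, add_zero] at he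
    exact hD (hde.inj (by rw [he, map_zero, map_zero]))
  subst hy
  obtain ⟨x, hx⟩ := exists_ne (0 : h)
  have ha : a = 0 := by
    have hι := hu (ι x)
    rw [map_zero, zero_add, lie_add, lie_smul, lie_smul, ← lie_skew, hde.bracket_e, hde.lie_f,
      smul_zero, add_zero, smul_neg, neg_eq_zero, smul_eq_zero] at hι
    refine hι.resolve_right fun hDx => hx (hD ?_)
    exact hde.inj (by rw [hDx, map_zero, map_zero])
  exact ⟨b, by rw [ha, map_zero, zero_add, zero_smul, zero_add]⟩

end IsDoubleExtension

end DoubleExtension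

section Isomorphism

variable {F h g1 g2 : Type*} [Field F] [LieRing h] [LieAlgebra F h] [LieRing g1]
  [LieAlgebra F g1] [LieRing g2] [LieAlgebra F g2] {Bh : LinearMap.BilinForm F h}
  {Bg1 : LinearMap.BilinForm F g1} {Bg2 : LinearMap.BilinForm F g2} {D1 D2 : h →ₗ[F] h}
  {ι1 : h →ₗ[F] g1} {ι2 : h →ₗ[F] g2} {e1 f1 : g1} {e2 f2 : g2}

namespace IsDoubleExtension

theorem exists_map_f_eq_smul [Nontrivial h] (hde1 : IsDoubleExtension Bh Bg1 D1 ι1 e1 f1)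
    (hde2 : IsDoubleExtension Bh Bg2 D2 ι2 e2 f2) (hD2 : Function.Injective D2)
    (A : g1 ≃ₗ⁅F⁆ g2) : ∃ μ : F, μ ≠ 0 ∧ A f1 = μ • f2 := by
  have hf1 : f1 ∈ LieAlgebra.center F g1 :=
    (LieModule.mem_maxTrivSubmodule _ _ _ _).mpr hde1.lie_f
  obtain ⟨μ, hμ⟩ : ∃ μ : F, A f1 = μ • f2 := hde2.exists_eq_smul_f_of_mem_center hD2 <|
    LieAlgebra.map_mem_center_of_surjective (φ := A.toLinearEquiv.toLinearMap) A.map_lie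
      A.surjective hf1
  refine ⟨μ, ?_, hμ⟩
  rintro rfl
  exact hde1.f_ne_zero (by simpa using hμ)

noncomputable def inducedMap (hde2 : IsDoubleExtension Bh Bg2 D2 ι2 e2 f2)
    (hD2 : Function.Injective D2) (A : g1 ≃ₗ⁅F⁆ g2) (ι1 : h →ₗ[F] g1) : h →ₗ[F] h :=
  hde2.proj hD2 ∘ₗ A.toLinearEquiv.toLinearMap ∘ₗ ι1

theorem inducedMap_apply (hde2 : IsDoubleExtension Bh Bg2 D2 ι2 e2 f2)
    (hD2 : Function.Injective D2) (A : g1 ≃ₗ⁅F⁆ g2) (x : h) :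
    hde2.inducedMap hD2 A ι1 x = hde2.proj hD2 (A (ι1 x)) :=
  rfl

theorem exists_map_ι_eq [Nontrivial h] (hde1 : IsDoubleExtension Bh Bg1 D1 ι1 e1 f1)
    (hde2 : IsDoubleExtension Bh Bg2 D2 ι2 e2 f2) (hD2 : Function.Injective D2)
    (A : g1 ≃ₗ⁅F⁆ g2) (hA : ∀ x y, Bg2 (A x) (A y) = Bg1 x y) (x : h) :
    ∃ b : F, A (ι1 x) = ι2 (hde2.inducedMap hD2 A ι1 x) + b • f2 := by
  obtain ⟨μ, hμ, hAf⟩ := exists_map_f_eq_smul hde1 hde2 hD2 A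
  have horth : Bg2 (A (ι1 x)) f2 = 0 := by
    have := (hA (ι1 x) f1).trans (hde1.form_hf x)
    rw [hAf, map_smul, smul_eq_mul, mul_eq_zero] at this
    exact this.resolve_left hμ
  exact hde2.exists_eq_add_smul_f hD2 horth

theorem inducedMap_lie [Nontrivial h] (hde1 : IsDoubleExtension Bh Bg1 D1 ι1 e1 f1)
    (hde2 : IsDoubleExtension Bh Bg2 D2 ι2 e2 f2) (hD2 : Function.Injective D2)
    (A : g1 ≃ₗ⁅F⁆ g2) (hA : ∀ x y, Bg2 (A x) (A y) = Bg1 x y) (x y : h) :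
    hde2.inducedMap hD2 A ι1 ⁅x, y⁆ =
      ⁅hde2.inducedMap hD2 A ι1 x, hde2.inducedMap hD2 A ι1 y⁆ := by
  obtain ⟨μ, -, hAf⟩ := exists_map_f_eq_smul hde1 hde2 hD2 A
  obtain ⟨bx, hx⟩ := exists_map_ι_eq hde1 hde2 hD2 A hA x
  obtain ⟨by_, hy⟩ := exists_map_ι_eq hde1 hde2 hD2 A hA y
  calc hde2.inducedMap hD2 A ι1 ⁅x, y⁆
      = hde2.proj hD2 (A ⁅ι1 x, ι1 y⁆) := by
        simp [inducedMap_apply, hde1.bracket_h, hAf]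
    _ = hde2.proj hD2 ⁅ι2 (hde2.inducedMap hD2 A ι1 x) + bx • f2,
          ι2 (hde2.inducedMap hD2 A ι1 y) + by_ • f2⁆ := by
        rw [LieEquiv.map_lie, hx, hy]
    _ = _ := by
        simp [hde2.bracket_h, hde2.bracket_f, hde2.lie_f]

theorem inducedMap_injective [Nontrivial h] (hde1 : IsDoubleExtension Bh Bg1 D1 ι1 e1 f1)
    (hde2 : IsDoubleExtension Bh Bg2 D2 ι2 e2 f2) (hD1 : Function.Injective D1)
    (hD2 : Function.Injective D2) (A : g1 ≃ₗ⁅F⁆ g2) (hA : ∀ x y, Bg2 (A x) (A y) = Bg1 x y) :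
    Function.Injective (hde2.inducedMap hD2 A ι1) := by
  refine (injective_iff_map_eq_zero _).mpr fun x hx => hD1 (hde1.inj ?_)
  obtain ⟨b, hb⟩ := exists_map_ι_eq hde1 hde2 hD2 A hA x
  rw [hx, map_zero, zero_add] at hb
  apply EquivLike.injective A
  rw [← hde1.bracket_e, LieEquiv.map_lie, hb, lie_smul, hde2.lie_f, smul_zero, map_zero,
    map_zero, map_zero]

theorem exists_map_e_eq [Nontrivial h] (hde1 : IsDoubleExtension Bh Bg1 D1 ι1 e1 f1)
    (hde2 : IsDoubleExtension Bh Bg2 D2 ι2 e2 f2) (hD2 : Function.Injective D2)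
    (A : g1 ≃ₗ⁅F⁆ g2) (hA : ∀ x y, Bg2 (A x) (A y) = Bg1 x y) :
    ∃ (w : h) (c d : F), c ≠ 0 ∧ A e1 = ι2 w + c • e2 + d • f2 := by
  obtain ⟨μ, -, hAf⟩ := exists_map_f_eq_smul hde1 hde2 hD2 A
  obtain ⟨w, c, d, hAe⟩ := hde2.spanning (A e1)
  refine ⟨w, c, d, fun hc => ?_, hAe⟩
  have := (hA e1 f1).trans hde1.form_ef
  simp [hAf, hAe, hc, hde2.form_hf, hde2.form_ff] at this

theorem inducedMap_mem_center [Nontrivial h] [Module.Finite F h]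
    (hde1 : IsDoubleExtension Bh Bg1 D1 ι1 e1 f1) (hde2 : IsDoubleExtension Bh Bg2 D2 ι2 e2 f2)
    (hD1 : Function.Injective D1) (hD2 : Function.Injective D2) (A : g1 ≃ₗ⁅F⁆ g2)
    (hA : ∀ x y, Bg2 (A x) (A y) = Bg1 x y) {z : h} (hz : z ∈ LieAlgebra.center F h) :
    hde2.inducedMap hD2 A ι1 z ∈ LieAlgebra.center F h :=
  LieAlgebra.map_mem_center_of_surjective (inducedMap_lie hde1 hde2 hD2 A hA)
    (LinearMap.injective_iff_surjective.mp (inducedMap_injective hde1 hde2 hD1 hD2 A hA)) hz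

theorem exists_intertwining_on_center [Nontrivial h] [Module.Finite F h]
    (hde1 : IsDoubleExtension Bh Bg1 D1 ι1 e1 f1) (hde2 : IsDoubleExtension Bh Bg2 D2 ι2 e2 f2)
    (hD1 : Function.Injective D1) (hD2 : Function.Injective D2) (A : g1 ≃ₗ⁅F⁆ g2)
    (hA : ∀ x y, Bg2 (A x) (A y) = Bg1 x y) :
    ∃ c : F, c ≠ 0 ∧ ∀ z ∈ LieAlgebra.center F h,
      hde2.inducedMap hD2 A ι1 (D1 z) = c • D2 (hde2.inducedMap hD2 A ι1 z) := by
  set φ := hde2.inducedMap hD2 A ι1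
  obtain ⟨w, c, d, hc, hAe⟩ := exists_map_e_eq hde1 hde2 hD2 A hA
  refine ⟨c, hc, fun z hz => ?_⟩
  have hwz : ⁅w, φ z⁆ = 0 := (LieModule.mem_maxTrivSubmodule _ _ _ _).mp
    (inducedMap_mem_center hde1 hde2 hD1 hD2 A hA hz) w
  obtain ⟨b, hb⟩ := exists_map_ι_eq hde1 hde2 hD2 A hA z
  calc φ (D1 z)
      = hde2.proj hD2 (A ⁅e1, ι1 z⁆) := by rw [hde1.bracket_e]; rfl
    _ = hde2.proj hD2 ⁅ι2 w + c • e2 + d • f2, ι2 (φ z) + b • f2⁆ := by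
        rw [LieEquiv.map_lie, hAe, hb]
    _ = c • D2 (φ z) := by
        simp [hde2.bracket_h, hde2.bracket_e, hde2.bracket_f, hde2.lie_f, hwz]

end IsDoubleExtension

end Isomorphism

theorem stmt_5_general {F : Type*} [Field F]
    {h : Type*} [LieRing h] [LieAlgebra F h] [Module.Finite F h]
    (Bh : LinearMap.BilinForm F h)
    (D1 D2 : h →ₗ[F] h) (hD1 : IsSkewDerivation Bh D1) (hD2 : IsSkewDerivation Bh D2)
    (hD1inv : Function.Bijective D1) (hD2inv : Function.Bijective D2)
    {g1 g2 : Type*} [LieRing g1] [LieAlgebra F g1] [LieRing g2] [LieAlgebra F g2]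
    (Bg1 : LinearMap.BilinForm F g1) (Bg2 : LinearMap.BilinForm F g2)
    (ι1 : h →ₗ[F] g1) (e1 f1 : g1) (ι2 : h →ₗ[F] g2) (e2 f2 : g2)
    (hde1 : IsDoubleExtension Bh Bg1 D1 ι1 e1 f1)
    (hde2 : IsDoubleExtension Bh Bg2 D2 ι2 e2 f2)
    (hiso : IIsom F Bg1 Bg2) :
    ∃ (hZ1 : ∀ x ∈ LieSubmodule.toSubmodule (LieAlgebra.center F h),
        D1 x ∈ LieSubmodule.toSubmodule (LieAlgebra.center F h))
      (hZ2 : ∀ x ∈ LieSubmodule.toSubmodule (LieAlgebra.center F h),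
        D2 x ∈ LieSubmodule.toSubmodule (LieAlgebra.center F h))
      (lam : F)
      (Q : ↥(LieSubmodule.toSubmodule (LieAlgebra.center F h)) ≃ₗ[F]
        ↥(LieSubmodule.toSubmodule (LieAlgebra.center F h))),
      lam ≠ 0 ∧
      (∀ z, Q.symm (D1.restrict hZ1 (Q z)) = lam • D2.restrict hZ2 z) ∧
      (IsDiagonalizable (D1.restrict hZ1) ↔ IsDiagonalizable (D2.restrict hZ2)) := by
  have hZ1 := fun x (hx : x ∈ LieAlgebra.center F h) =>
    LieAlgebra.map_mem_center_of_derivation hD1.1 hx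
  have hZ2 := fun x (hx : x ∈ LieAlgebra.center F h) =>
    LieAlgebra.map_mem_center_of_derivation hD2.1 hx
  obtain ⟨lam, hlam, Q, hQ⟩ : ∃ lam : F, lam ≠ 0 ∧
      ∃ Q : LieAlgebra.center F h ≃ₗ[F] LieAlgebra.center F h,
        ∀ z, Q.symm (D1.restrict hZ1 (Q z)) = lam • D2.restrict hZ2 z := by
    rcases subsingleton_or_nontrivial h with _ | _
    · exact ⟨1, one_ne_zero, LinearEquiv.refl F _, fun _ => Subsingleton.elim _ _⟩
    obtain ⟨A, hA⟩ := hiso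
    obtain ⟨c, hc, hcomm⟩ :=
      IsDoubleExtension.exists_intertwining_on_center hde1 hde2 hD1inv.1 hD2inv.1 A hA
    exact ⟨c, hc, exists_linearEquiv_conj_restrict hZ1 hZ2
      (fun _ => IsDoubleExtension.inducedMap_mem_center hde1 hde2 hD1inv.1 hD2inv.1 A hA)
      (IsDoubleExtension.inducedMap_injective hde1 hde2 hD1inv.1 hD2inv.1 A hA) hcomm⟩
  exact ⟨hZ1, hZ2, lam, Q, hlam, hQ, isDiagonalizable_iff_of_conj Q hlam hQ⟩

/-- Corollary: if the double extensions of `(h,B)` by invertible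
skew-symmetric derivations `D1, D2` are i-isomorphic, then `D1` and `D2` restricted to the
center of `h` agree up to conjugation and a nonzero multiple; in particular one restriction
is diagonalizable iff the other is. -/
theorem stmt_5 {F : Type*} [Field F] [CharZero F]
    {h : Type*} [LieRing h] [LieAlgebra F h] [Module.Finite F h]
    (Bh : LinearMap.BilinForm F h) (hq : IsQuadratic Bh)
    (D1 D2 : h →ₗ[F] h) (hD1 : IsSkewDerivation Bh D1) (hD2 : IsSkewDerivation Bh D2)
    (hD1inv : Function.Bijective D1) (hD2inv : Function.Bijective D2)
    {g1 g2 : Type*} [LieRing g1] [LieAlgebra F g1] [LieRing g2] [LieAlgebra F g2]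
    (Bg1 : LinearMap.BilinForm F g1) (Bg2 : LinearMap.BilinForm F g2)
    (ι1 : h →ₗ[F] g1) (e1 f1 : g1) (ι2 : h →ₗ[F] g2) (e2 f2 : g2)
    (hde1 : IsDoubleExtension Bh Bg1 D1 ι1 e1 f1)
    (hde2 : IsDoubleExtension Bh Bg2 D2 ι2 e2 f2)
    (hiso : IIsom F Bg1 Bg2) :
    ∃ (hZ1 : ∀ x ∈ LieSubmodule.toSubmodule (LieAlgebra.center F h),
        D1 x ∈ LieSubmodule.toSubmodule (LieAlgebra.center F h))
      (hZ2 : ∀ x ∈ LieSubmodule.toSubmodule (LieAlgebra.center F h),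
        D2 x ∈ LieSubmodule.toSubmodule (LieAlgebra.center F h))
      (lam : F)
      (Q : ↥(LieSubmodule.toSubmodule (LieAlgebra.center F h)) ≃ₗ[F]
        ↥(LieSubmodule.toSubmodule (LieAlgebra.center F h))),
      lam ≠ 0 ∧
      (∀ z, Q.symm (D1.restrict hZ1 (Q z)) = lam • D2.restrict hZ2 z) ∧
      (IsDiagonalizable (D1.restrict hZ1) ↔ IsDiagonalizable (D2.restrict hZ2)) :=
  stmt_5_general Bh D1 D2 hD1 hD2 hD1inv hD2inv Bg1 Bg2 ι1 e1 f1 ι2 e2 f2 hde1 hde2 hiso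
end

section
/- Every solvable quadratic Lie algebra (g,B) of dimension n ≤ 3 over an algebraically closed field F of characteristic 0 is abelian, hence i-isomorphic to F^n with a nondegenerate symmetric bilinear form. -/
open LinearMap Module

/-!
Invariance and nondegeneracy of `B` make `[g, g]ᗮ` central, so the center has codimension at
most `d = dim [g, g]`. Solvability gives `[g, g] ≠ g`, hence `d ≤ 2`. Modulo the center the
bracket is an alternating form on a space of dimension `≤ 2`, so its image is a line and
`d ≤ 1`; then the center has codimension `≤ 1`, which forces `g` to be abelian. The orthonormal
basis comes from diagonalizing `B` and rescaling by square roots.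
-/

theorem Submodule.exists_sup_span_range_eq_top_of_finrank_le {K V : Type*} [DivisionRing K]
    [AddCommGroup V] [Module K V] [FiniteDimensional K V] (Z : Submodule K V) {k : ℕ}
    (hk : finrank K V ≤ finrank K Z + k) :
    ∃ v : Fin k → V, Z ⊔ span K (Set.range v) = ⊤ := by
  obtain ⟨W, hW⟩ := Z.exists_isCompl
  have hWk : finrank K W ≤ k := by have := finrank_add_eq_of_isCompl hW; omega
  let b := Module.finBasis K W
  set v := Function.extend (Fin.castLE hWk) (W.subtype ∘ b) 0
  have hW_le : W ≤ span K (Set.range v) :=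
    calc W = span K (Set.range (W.subtype ∘ b)) := by
          rw [Set.range_comp, ← Submodule.map_span, b.span_eq, Submodule.map_top,
            Submodule.range_subtype]
      _ ≤ span K (Set.range v) := span_mono <| by
          rintro _ ⟨i, rfl⟩
          exact ⟨Fin.castLE hWk i, (Fin.castLE_injective hWk).extend_apply _ _ _⟩
  exact ⟨v, eq_top_iff.2 <| hW.sup_eq_top.ge.trans (sup_le_sup_left hW_le Z)⟩

namespace LieAlgebra

variable {K L : Type*} [Field K] [LieRing L] [LieAlgebra K L]

theorem lie_mem_derivedSeries_one (x y : L) :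
    ⁅x, y⁆ ∈ (derivedSeries K L 1).toSubmodule := by
  rw [← LieIdeal.toLieSubalgebra_toSubmodule, coe_derivedSeries_one_eq]
  exact Submodule.subset_span ⟨x, y, rfl⟩

theorem derivedSeries_one_le_span_image2_lie {s : Set L}
    (hs : (center K L).toSubmodule ⊔ Submodule.span K s = ⊤) :
    (derivedSeries K L 1).toSubmodule ≤ Submodule.span K (Set.image2 (⁅·, ·⁆) s s) := by
  have hdecomp (x : L) : ∃ z ∈ center K L, ∃ u ∈ Submodule.span K s, z + u = x :=
    Submodule.mem_sup.1 (hs ▸ Submodule.mem_top)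
  rw [← LieIdeal.toLieSubalgebra_toSubmodule, coe_derivedSeries_one_eq, Submodule.span_le]
  rintro _ ⟨x, y, rfl⟩
  obtain ⟨z, hz, u, hu, rfl⟩ := hdecomp x
  obtain ⟨z', hz', u', hu', rfl⟩ := hdecomp y
  rw [LieModule.mem_maxTrivSubmodule] at hz hz'
  have hz_left : ⁅z, z' + u'⁆ = 0 := by rw [← lie_skew, hz, neg_zero]
  rw [add_lie, hz_left, zero_add, lie_add, hz', zero_add]
  simpa only [Submodule.map₂_span_span, LinearMap.mk₂_apply, SetLike.mem_coe] using
    Submodule.apply_mem_map₂ (LinearMap.mk₂ K (⁅·, ·⁆) add_lie smul_lie lie_add lie_smul) hu hu'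

variable [FiniteDimensional K L]

theorem isLieAbelian_of_finrank_le_finrank_center_add_one
    (h : finrank K L ≤ finrank K (center K L).toSubmodule + 1) : IsLieAbelian L := by
  obtain ⟨v, hv⟩ := Submodule.exists_sup_span_range_eq_top_of_finrank_le _ h
  refine ⟨fun x y => ?_⟩
  simpa [Set.range_unique] using derivedSeries_one_le_span_image2_lie hv
    (lie_mem_derivedSeries_one x y)

theorem exists_derivedSeries_one_le_span_singleton
    (h : finrank K L ≤ finrank K (center K L).toSubmodule + 2) :
    ∃ w : L, (derivedSeries K L 1).toSubmodule ≤ K ∙ w := by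
  obtain ⟨v, hv⟩ := Submodule.exists_sup_span_range_eq_top_of_finrank_le _ h
  refine ⟨⁅v 0, v 1⁆, (derivedSeries_one_le_span_image2_lie hv).trans ?_⟩
  have hw : ⁅v 0, v 1⁆ ∈ K ∙ ⁅v 0, v 1⁆ := Submodule.mem_span_singleton_self _
  rw [Submodule.span_le, Set.image2_subset_iff]
  simp only [Set.forall_mem_range, Fin.forall_fin_two, lie_self, SetLike.mem_coe, zero_mem, hw,
    true_and, and_true]
  simpa only [lie_skew] using neg_mem hw

theorem finrank_derivedSeries_one_le_of_isSolvable [IsSolvable L] {n : ℕ}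
    (hn : finrank K L ≤ n + 1) : finrank K (derivedSeries K L 1).toSubmodule ≤ n := by
  rcases subsingleton_or_nontrivial L with _ | _
  · exact (Submodule.finrank_le _).trans (by simp [finrank_zero_of_subsingleton])
  · have hlt : derivedSeries K L 1 < ⊤ := derivedSeries_lt_top_of_solvable K L
    exact Nat.le_of_lt_succ <|
      (Submodule.finrank_lt ((LieSubmodule.toSubmodule_eq_top _).not.2 hlt.ne)).trans_le hn

end LieAlgebra

namespace LinearMap.BilinForm

open LieAlgebra

variable {K L : Type*} [Field K] [LieRing L] [LieAlgebra K L] {B : LinearMap.BilinForm K L}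

theorem orthogonal_derivedSeries_one_le_center (hB : B.SeparatingRight) (hinv : LieInvariant B) :
    B.orthogonal (derivedSeries K L 1).toSubmodule ≤ (center K L).toSubmodule := by
  intro z hz
  rw [LieSubmodule.mem_toSubmodule, LieModule.mem_maxTrivSubmodule]
  refine fun y => hB _ fun x => ?_
  rw [← hinv]
  exact hz _ (lie_mem_derivedSeries_one x y)

theorem isLieAbelian_of_finrank_derivedSeries_one_le_two [FiniteDimensional K L]
    (hB : B.Nondegenerate) (hinv : LieInvariant B)
    (h : finrank K (derivedSeries K L 1).toSubmodule ≤ 2) : IsLieAbelian L := by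
  have hcodim : finrank K L ≤
      finrank K (center K L).toSubmodule + finrank K (derivedSeries K L 1).toSubmodule := by
    have := finrank_orthogonal hB (derivedSeries K L 1).toSubmodule
    have := Submodule.finrank_mono (orthogonal_derivedSeries_one_le_center hB.2 hinv)
    omega
  obtain ⟨w, hw⟩ := exists_derivedSeries_one_le_span_singleton (K := K) (L := L) (by omega)
  have : finrank K (derivedSeries K L 1).toSubmodule ≤ 1 :=
    (Submodule.finrank_mono hw).trans (by simpa using finrank_span_le_card (R := K) {w})
  exact isLieAbelian_of_finrank_le_finrank_center_add_one (K := K) (by omega)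

end LinearMap.BilinForm

theorem LinearMap.BilinForm.exists_orthonormal_basis_of_isAlgClosed {K V : Type*} [Field K]
    [IsAlgClosed K] [Invertible (2 : K)] [AddCommGroup V] [Module K V] [FiniteDimensional K V]
    {B : LinearMap.BilinForm K V} (hB : LinearMap.IsSymm B) (hnd : B.SeparatingLeft) :
    ∃ b : Basis (Fin (finrank K V)) K V, ∀ i j, B (b i) (b j) = if i = j then 1 else 0 := by
  obtain ⟨v, hv⟩ := exists_orthogonal_basis hB
  have hdiag := hv.not_isOrtho_basis_self_of_separatingLeft hnd
  choose c hc using fun i => IsAlgClosed.exists_eq_mul_self (B (v i) (v i))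
  have hc0 (i) : c i ≠ 0 := fun h => hdiag i (by rw [hc i, h, mul_zero])
  refine ⟨v.unitsSMul fun i => (Units.mk0 (c i) (hc0 i))⁻¹, fun i j => ?_⟩
  simp only [Basis.unitsSMul_apply, Units.smul_def, map_smul, LinearMap.smul_apply, smul_eq_mul,
    Units.val_inv_eq_inv_val, Units.val_mk0]
  split_ifs with hij
  · subst hij
    rw [hc i]
    field_simp [hc0 i]
  · rw [hv hij, mul_zero, mul_zero]

/-- every solvable quadratic Lie algebra of dimension ≤ 3 over an
algebraically closed field of characteristic 0 is abelian, hence i-isomorphic to `F^n`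
with a nondegenerate symmetric bilinear form. -/
theorem stmt_7 {F : Type*} [Field F] [IsAlgClosed F] [CharZero F]
    {g : Type*} [LieRing g] [LieAlgebra F g] [Module.Finite F g]
    (B : LinearMap.BilinForm F g) (hq : IsQuadratic B)
    (hsol : LieAlgebra.IsSolvable g) (hdim : finrank F g ≤ 3) :
    IsLieAbelian g ∧
      ∃ b : Basis (Fin (finrank F g)) F g,
        ∀ i j, B (b i) (b j) = if i = j then 1 else 0 := by
  obtain ⟨hnd, hsymm, hinv⟩ := hq
  have : Invertible (2 : F) := invertibleOfNonzero two_ne_zero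
  exact ⟨LinearMap.BilinForm.isLieAbelian_of_finrank_derivedSeries_one_le_two hnd hinv
      (LieAlgebra.finrank_derivedSeries_one_le_of_isSolvable hdim),
    LinearMap.BilinForm.exists_orthonormal_basis_of_isAlgClosed ⟨hsymm⟩ hnd.1⟩
end

section
/- Every solvable quadratic Lie algebra (g,B) of dimension 4 over an algebraically closed field F of characteristic 0 is either abelian (i-isomorphic to F^4) or i-isomorphic to the diamond Lie algebra g4. -/
open LinearMap Module

/-- the diamond Lie algebra g4, basis {X,P,Q,Z} -/
def IsG4 (F : Type*) [Field F] (g : Type*) [LieRing g] [LieAlgebra F g]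
    (B : LinearMap.BilinForm F g) : Prop :=
  ∃ b : Basis (Fin 4) F g,
    (⁅b 0, b 1⁆ = b 1) ∧
    (⁅b 0, b 2⁆ = -(b 2)) ∧
    (⁅b 0, b 3⁆ = 0) ∧
    (⁅b 1, b 2⁆ = b 3) ∧
    (⁅b 1, b 3⁆ = 0) ∧
    (⁅b 2, b 3⁆ = 0) ∧
    (B (b 0) (b 0) = 0) ∧
    (B (b 0) (b 1) = 0) ∧
    (B (b 0) (b 2) = 0) ∧
    (B (b 0) (b 3) = 1) ∧
    (B (b 1) (b 0) = 0) ∧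
    (B (b 1) (b 1) = 0) ∧
    (B (b 1) (b 2) = 1) ∧
    (B (b 1) (b 3) = 0) ∧
    (B (b 2) (b 0) = 0) ∧
    (B (b 2) (b 1) = 1) ∧
    (B (b 2) (b 2) = 0) ∧
    (B (b 2) (b 3) = 0) ∧
    (B (b 3) (b 0) = 1) ∧
    (B (b 3) (b 1) = 0) ∧
    (B (b 3) (b 2) = 0) ∧
    (B (b 3) (b 3) = 0)

/-!
In a quadratic Lie algebra, invariance turns `B ⁅x, y⁆ w` into an alternating trilinear form
which vanishes as soon as one argument is central; by nondegeneracy, the centre is the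
orthogonal of the derived algebra. If the centre has codimension at most two, any three vectors
are dependent modulo the centre, so the trilinear form and hence the bracket vanish. In the
nonabelian solvable case of dimension four this leaves a one-dimensional centre `F z` and a
three-dimensional derived algebra `z^⊥`. The vector `z` is isotropic: otherwise
`g = F z ⊕ z^⊥`, so the derived algebra would be perfect, contradicting solvability.
Completing `z` to a Witt basis `(e, p, q, z)` (`B e z = B p q = 1`, all other pairings
zero), the single number `λ = B ⁅e, p⁆ q` determines all brackets, `⁅e, p⁆ = λ p`,
`⁅e, q⁆ = -λ q`, `⁅p, q⁆ = λ z`, and `λ ≠ 0` since `g` is not abelian; replacing `e, z` by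
`λ⁻¹ e, λ z` gives `g4`. In the abelian case an orthonormal basis exists because `F` is
algebraically closed.
-/

section BilinearForm

variable {F V : Type*} [Field F] [AddCommGroup V] [Module F V] {B : LinearMap.BilinForm F V}

theorem linearIndependent_of_dual_family {ι : Type*} [DecidableEq ι] {v w : ι → V}
    (h : ∀ i j, B (v i) (w j) = if i = j then 1 else 0) : LinearIndependent F v := by
  refine linearIndependent_iff'.mpr fun s c hc i hi => ?_
  simpa [map_sum, h, Finset.sum_ite_eq', hi] using congrArg (B.flip (w i)) hc

theorem exists_basis_coe_eq_of_dual_family [FiniteDimensional F V] {ι : Type*} [Fintype ι]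
    [DecidableEq ι] {v w : ι → V} (h : ∀ i j, B (v i) (w j) = if i = j then 1 else 0)
    (hcard : Fintype.card ι = finrank F V) : ∃ b : Basis ι F V, ⇑b = v :=
  ⟨basisOfLinearIndependentOfCardEqFinrank' v (linearIndependent_of_dual_family h) hcard,
    coe_basisOfLinearIndependentOfCardEqFinrank' _ _ _⟩

theorem exists_basis_coe_eq_of_witt_family [FiniteDimensional F V] (hV : finrank F V = 4)
    {v : Fin 4 → V} (hv : ∀ i j, B (v i) (v j) = if j = i.rev then 1 else 0) :
    ∃ b : Basis (Fin 4) F V, ⇑b = v :=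
  exists_basis_coe_eq_of_dual_family (B := B) (w := v ∘ Fin.rev)
    (fun i j => by simp [hv, eq_comm]) (by simp [hV])

theorem LinearMap.BilinForm.Nondegenerate.eq_of_apply_basis (hB : B.Nondegenerate)
    {ι : Type*} (b : Basis ι F V) {x y : V} (h : ∀ i, B x (b i) = B y (b i)) : x = y := by
  have hxy : B x = B y := b.ext h
  exact sub_eq_zero.mp (hB.1 _ fun w => by rw [map_sub, LinearMap.sub_apply, hxy, sub_self])

theorem exists_orthonormal_basis [IsAlgClosed F] [NeZero (2 : F)] [FiniteDimensional F V]
    (hB : B.Nondegenerate) (hsymm : BilinSymm B) {n : ℕ} (hn : finrank F V = n) :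
    ∃ b : Basis (Fin n) F V, ∀ i j, B (b i) (b j) = if i = j then 1 else 0 := by
  let : Invertible (2 : F) := invertibleOfNonzero two_ne_zero
  obtain ⟨v, hv⟩ := LinearMap.BilinForm.exists_orthogonal_basis ⟨hsymm⟩
  have hvv := LinearMap.BilinForm.iIsOrtho.not_isOrtho_basis_self_of_nondegenerate hv hB
  choose s hs using fun i => IsAlgClosed.exists_eq_mul_self (B (v i) (v i))
  have hs0 : ∀ i, s i ≠ 0 := fun i h => hvv i (by rw [hs i, h, mul_zero])
  let w := v.unitsSMul fun i => Units.mk0 (s i)⁻¹ (inv_ne_zero (hs0 i))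
  refine ⟨w.reindex (finCongr hn), fun i j => ?_⟩
  simp only [Basis.reindex_apply, w, Basis.unitsSMul_apply, Units.smul_mk0, map_smul,
    LinearMap.smul_apply, smul_eq_mul]
  split_ifs with hij
  · subst hij
    rw [hs]
    field_simp [hs0]
  · rw [hv (by simpa using hij), mul_zero, mul_zero]

theorem exists_hyperbolic_partner [NeZero (2 : F)] (hsymm : BilinSymm B) {x y : V}
    (hx : B x x = 0) (hxy : B x y ≠ 0) :
    ∃ e ∈ Submodule.span F {x, y}, B x e = 1 ∧ B e e = 0 := by
  refine ⟨(-(B y y / (2 * B x y ^ 2))) • x + (B x y)⁻¹ • y,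
    Submodule.mem_span_pair.mpr ⟨_, _, rfl⟩, ?_, ?_⟩
  · simp only [map_add, map_smul, smul_eq_mul, hx]
    field_simp
    ring
  · simp only [map_add, map_smul, LinearMap.add_apply, LinearMap.smul_apply, smul_eq_mul, hx,
      hsymm y x]
    field_simp
    ring

theorem exists_isotropic_ne_zero [IsAlgClosed F] [NeZero (2 : F)] [FiniteDimensional F V]
    (h : 1 < finrank F V) : ∃ p : V, p ≠ 0 ∧ B p p = 0 := by
  have : Nontrivial V := Module.nontrivial_of_finrank_pos (zero_lt_one.trans h)
  obtain ⟨u, hu⟩ := exists_ne (0 : V)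
  obtain ⟨v, huv⟩ := exists_linearIndependent_pair_of_one_lt_finrank h hu
  by_cases huu : B u u = 0
  · exact ⟨u, hu, huu⟩
  obtain ⟨t, ht⟩ := exists_quadratic_eq_zero (b := B u v + B v u) (c := B v v) huu
    (IsAlgClosed.exists_eq_mul_self _)
  refine ⟨t • u + v, fun h0 => ?_, ?_⟩
  · exact one_ne_zero (LinearIndependent.pair_iff.mp huv t 1 (by rw [one_smul, h0])).2
  · simp only [map_add, map_smul, LinearMap.add_apply, LinearMap.smul_apply, smul_eq_mul]
    linear_combination ht

theorem exists_witt_family [IsAlgClosed F] [NeZero (2 : F)] [FiniteDimensional F V]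
    (hB : B.Nondegenerate) (hsymm : BilinSymm B) (hV : finrank F V = 4) {z : V} (hz : z ≠ 0)
    (hzz : B z z = 0) :
    ∃ v : Fin 4 → V, v 3 = z ∧ ∀ i j, B (v i) (v j) = if j = i.rev then 1 else 0 := by
  have exists_apply_ne_zero : ∀ x : V, x ≠ 0 → ∃ y, B x y ≠ 0 := fun x hx => by
    by_contra! h
    exact hx (hB.1 x h)
  obtain ⟨u, hu⟩ := exists_apply_ne_zero z hz
  obtain ⟨e, -, hze, hee⟩ := exists_hyperbolic_partner hsymm hzz hu
  have hW : 1 < finrank F (LinearMap.ker ((B z).prod (B e))) := by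
    have := ((B z).prod (B e)).finrank_range_add_finrank_ker
    have := (LinearMap.range ((B z).prod (B e))).finrank_le
    simp only [finrank_prod, finrank_self] at this
    omega
  set W := LinearMap.ker ((B z).prod (B e))
  have mem_W : ∀ x, x ∈ W ↔ B z x = 0 ∧ B e x = 0 := fun x => by simp [W]
  obtain ⟨⟨p, hpW⟩, hp, hpp : B p p = 0⟩ := exists_isotropic_ne_zero (B := B.restrict W) hW
  obtain ⟨hzp, hep⟩ := (mem_W p).mp hpW
  obtain ⟨y, hy⟩ := exists_apply_ne_zero p (by simpa using hp)
  set y' := y - B e y • z - B z y • e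
  have hy'W : y' ∈ W :=
    (mem_W y').mpr ⟨by simp [y', hzz, hze], by simp [y', hee, hsymm e z, hze]⟩
  have hpy' : B p y' = B p y := by simp [y', hsymm p z, hsymm p e, hzp, hep]
  obtain ⟨q, hq, hpq, hqq⟩ := exists_hyperbolic_partner hsymm hpp (hpy' ▸ hy)
  have hqW : q ∈ W := Submodule.span_le.mpr (Set.insert_subset hpW (by simpa using hy'W)) hq
  obtain ⟨hzq, heq⟩ := (mem_W q).mp hqW
  refine ⟨![e, p, q, z], rfl, fun i j => ?_⟩
  fin_cases i <;> fin_cases j <;>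
    simp [hzz, hze, hee, hzp, hep, hzq, heq, hpp, hpq, hqq, hsymm _ z, hsymm _ e, hsymm q p]

end BilinearForm

theorem LieIdeal.eq_bot_of_lie_self_eq {R L : Type*} [CommRing R] [LieRing L] [LieAlgebra R L]
    [LieAlgebra.IsSolvable L] {I : LieIdeal R L} (h : ⁅I, I⁆ = I) : I = ⊥ := by
  obtain ⟨n, hn⟩ := LieAlgebra.IsSolvable.solvable R L
  have : LieAlgebra.derivedSeriesOfIdeal R L n I = I :=
    Function.iterate_fixed (f := fun J : LieIdeal R L => ⁅J, J⁆) h n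
  rw [← this, eq_bot_iff, ← hn]
  exact LieAlgebra.derivedSeriesOfIdeal_mono le_top n

theorem LieAlgebra.derivedSeries_one_le_lie_of_center_sup_eq_top {R L : Type*} [CommRing R]
    [LieRing L] [LieAlgebra R L] {I : LieIdeal R L} (h : center R L ⊔ I = ⊤) :
    derivedSeries R L 1 ≤ ⁅I, I⁆ := by
  rw [derivedSeries_def, derivedSeriesOfIdeal_succ, derivedSeriesOfIdeal_zero, ← h,
    LieSubmodule.sup_lie, LieSubmodule.lie_sup, LieSubmodule.lie_sup, LieSubmodule.lie_comm _ I,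
    LieModule.ideal_oper_maxTrivSubmodule_eq_bot, LieModule.ideal_oper_maxTrivSubmodule_eq_bot]
  simp

theorem isLieAbelian_of_lie_basis_eq_zero {F g ι : Type*} [Field F] [LieRing g] [LieAlgebra F g]
    (b : Basis ι F g) (h : ∀ i j, ⁅b i, b j⁆ = 0) : IsLieAbelian g := by
  have : (LieModule.toEnd F g g : g →ₗ[F] Module.End F g) = 0 :=
    LinearMap.ext_basis b b fun i j => by simpa using h i j
  exact ⟨fun x y => by simpa using LinearMap.congr_fun₂ this x y⟩

section Quadratic

open LieAlgebra

variable {F g : Type*} [Field F] [LieRing g] [LieAlgebra F g] {B : LinearMap.BilinForm F g}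

theorem LieInvariant.apply_lie_self_right (hB : LieInvariant B) (x y : g) : B ⁅x, y⁆ y = 0 := by
  rw [hB, lie_self, map_zero]

theorem LieInvariant.apply_lie_self_left (hB : LieInvariant B) (x y : g) : B ⁅x, y⁆ x = 0 := by
  rw [← lie_skew, map_neg, LinearMap.neg_apply, hB.apply_lie_self_right, neg_zero]

theorem LieInvariant.apply_lie_swap (hB : LieInvariant B) (x y w : g) :
    B ⁅x, w⁆ y = -B ⁅x, y⁆ w := by
  rw [hB, hB, ← lie_skew, map_neg]

theorem LieInvariant.apply_lie_rotate (hB : LieInvariant B) (hsymm : BilinSymm B) (x y w : g) :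
    B ⁅x, y⁆ w = B ⁅y, w⁆ x := by
  rw [hB, hsymm]

theorem LieInvariant.apply_lie_eq_zero_of_mem_center (hB : LieInvariant B) {z : g}
    (hz : z ∈ center F g) (x y : g) : B ⁅x, y⁆ z = 0 := by
  rw [hB, (LieModule.mem_maxTrivSubmodule F g g z).mp hz y, map_zero]

theorem LieInvariant.mem_center_iff (hB : LieInvariant B) (hnd : B.Nondegenerate) {z : g} :
    z ∈ center F g ↔ ∀ x y : g, B ⁅x, y⁆ z = 0 := by
  refine ⟨fun hz x y => hB.apply_lie_eq_zero_of_mem_center hz x y,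
    fun h => (LieModule.mem_maxTrivSubmodule F g g z).mpr fun y => hnd.2 _ fun x => ?_⟩
  rw [← hB, h]

theorem LieInvariant.center_eq_orthogonal_derivedSeries (hB : LieInvariant B)
    (hnd : B.Nondegenerate) :
    (center F g).toSubmodule = B.orthogonal (derivedSeries F g 1).toSubmodule := by
  ext z
  have := coe_derivedSeries_one_eq F g
  rw [LieIdeal.toLieSubalgebra_toSubmodule] at this
  rw [LieSubmodule.mem_toSubmodule, hB.mem_center_iff hnd, this,
    LinearMap.BilinForm.mem_orthogonal_iff]
  change _ ↔ Submodule.span F _ ≤ LinearMap.ker (B.flip z)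
  simp only [Submodule.span_le, Set.subset_def, Set.mem_ofPred_eq, forall_exists_index]
  exact ⟨fun h _ x y hxy => hxy ▸ h x y, fun h x y => h _ x y rfl⟩

theorem LieInvariant.apply_lie_eq_zero_of_sum_mem_center (hB : LieInvariant B) {v : Fin 3 → g}
    {c : Fin 3 → F} (hc : c ≠ 0) (h : ∑ i, c i • v i ∈ center F g) :
    B ⁅v 0, v 1⁆ (v 2) = 0 := by
  rw [Fin.sum_univ_three] at h
  have hz := (LieModule.mem_maxTrivSubmodule F g g _).mp h
  have h0 : c 0 * B ⁅v 0, v 1⁆ (v 2) = 0 := by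
    simpa [hB.apply_lie_self_left] using
      congrArg (B · (v 2)) ((lie_skew _ _).symm.trans (neg_eq_zero.mpr (hz (v 1))))
  have h1 : c 1 * B ⁅v 0, v 1⁆ (v 2) = 0 := by
    simpa [hB.apply_lie_self_right] using congrArg (B · (v 2)) (hz (v 0))
  have h2 : c 2 * B ⁅v 0, v 1⁆ (v 2) = 0 := by
    simpa [hB.apply_lie_self_left, hB.apply_lie_self_right] using
      hB.apply_lie_eq_zero_of_mem_center h (v 0) (v 1)
  by_contra hΩ
  refine hc (funext fun i => ?_)
  fin_cases i
  exacts [(mul_eq_zero.mp h0).resolve_right hΩ, (mul_eq_zero.mp h1).resolve_right hΩ,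
    (mul_eq_zero.mp h2).resolve_right hΩ]

theorem LieInvariant.isLieAbelian_of_finrank_le_finrank_center_add_two (hB : LieInvariant B)
    (hnd : B.Nondegenerate) [FiniteDimensional F g]
    (h : finrank F g ≤ finrank F (center F g) + 2) : IsLieAbelian g := by
  refine ⟨fun x y => hnd.1 _ fun w => ?_⟩
  let Z := (center F g).toSubmodule
  let v : Fin 3 → g := ![x, y, w]
  have hdep : ¬LinearIndependent F (Z.mkQ ∘ v) := fun hli => by
    have := hli.fintype_card_le_finrank
    have := Z.finrank_quotient_add_finrank
    have : finrank F g ≤ finrank F Z + 2 := h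
    simp only [Fintype.card_fin] at *
    omega
  obtain ⟨c, hc, i, hi⟩ := Fintype.not_linearIndependent_iff.mp hdep
  refine hB.apply_lie_eq_zero_of_sum_mem_center (v := v) (fun h0 => hi (congrFun h0 i)) ?_
  rw [← LieSubmodule.mem_toSubmodule, ← Submodule.Quotient.mk_eq_zero, ← Submodule.mkQ_apply,
    map_sum]
  simpa using hc

theorem IsQuadratic.exists_isotropic_mem_center (hq : IsQuadratic B) [FiniteDimensional F g]
    [IsSolvable g] (hdim : finrank F g ≤ 4) (hab : ¬IsLieAbelian g) :
    ∃ z ∈ center F g, z ≠ 0 ∧ B z z = 0 := by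
  obtain ⟨hnd, hsymm, hinv⟩ := hq
  have : Nontrivial g := by
    by_contra h
    exact hab ⟨fun x y => (not_nontrivial_iff_subsingleton.mp h).elim _ _⟩
  set D := derivedSeries F g 1
  set Z := (center F g).toSubmodule
  have hZD : Z = B.orthogonal D.toSubmodule := hinv.center_eq_orthogonal_derivedSeries hnd
  have hDZ : D.toSubmodule = B.orthogonal Z := by
    rw [hZD, LinearMap.BilinForm.orthogonal_orthogonal hnd fun x y h => by rwa [hsymm]]
  have hD : finrank F D.toSubmodule < finrank F g :=
    Submodule.finrank_lt (by rw [ne_eq, LieSubmodule.toSubmodule_eq_top]; exact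
      (derivedSeries_lt_top_of_solvable F g).ne)
  have hZ : finrank F Z = 1 := by
    have := LinearMap.BilinForm.finrank_orthogonal hnd D.toSubmodule
    have : ¬finrank F g ≤ finrank F Z + 2 := fun h =>
      hab (hinv.isLieAbelian_of_finrank_le_finrank_center_add_two hnd h)
    rw [← hZD] at *
    omega
  obtain ⟨z, hzZ, hz⟩ := Submodule.exists_mem_ne_zero_of_ne_bot (p := Z) fun h => by
    rw [h, finrank_bot] at hZ; exact zero_ne_one hZ
  refine ⟨z, hzZ, hz, by_contra fun hzz => hab ?_⟩
  have hcompl := LinearMap.BilinForm.isCompl_span_singleton_orthogonal hzz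
  rw [← eq_span_singleton_of_mem_of_finrank_eq_one hZ hzZ hz, ← hDZ] at hcompl
  have hsup : center F g ⊔ D = ⊤ := by
    rw [← LieSubmodule.toSubmodule_inj, LieSubmodule.sup_toSubmodule, hcompl.sup_eq_top,
      LieSubmodule.top_toSubmodule]
  have hD_bot : D = ⊥ := LieIdeal.eq_bot_of_lie_self_eq <|
    le_antisymm (LieSubmodule.lie_le_left _ _) (derivedSeries_one_le_lie_of_center_sup_eq_top hsup)
  rwa [hD_bot, sup_bot_eq, ← isLieAbelian_iff_center_eq_top] at hsup

theorem IsQuadratic.exists_lie_witt_family (hq : IsQuadratic B) [FiniteDimensional F g]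
    (hdim : finrank F g = 4) {v : Fin 4 → g}
    (hv : ∀ i j, B (v i) (v j) = if j = i.rev then 1 else 0) (hz : v 3 ∈ center F g) :
    ∃ c : F, ⁅v 0, v 1⁆ = c • v 1 ∧ ⁅v 0, v 2⁆ = -c • v 2 ∧ ⁅v 1, v 2⁆ = c • v 3 := by
  obtain ⟨hnd, hsymm, hinv⟩ := hq
  obtain ⟨b, hb⟩ := exists_basis_coe_eq_of_witt_family hdim hv
  have hvz := hinv.apply_lie_eq_zero_of_mem_center hz
  -- a vector is determined by its pairings with the basis, and by invariance the pairings of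
  -- these brackets are all `0` or `±B ⁅v 0, v 1⁆ (v 2)`
  refine ⟨B ⁅v 0, v 1⁆ (v 2), ?_, ?_, ?_⟩ <;> refine hnd.eq_of_apply_basis b fun i => ?_ <;>
    rw [hb] <;> fin_cases i <;>
    simp [hv, hvz, hinv.apply_lie_self_left, hinv.apply_lie_self_right,
      hinv.apply_lie_swap (v 0) (v 1) (v 2), (hinv.apply_lie_rotate hsymm (v 0) (v 1) (v 2)).symm]

theorem isG4_of_lie_witt_family [FiniteDimensional F g] (hdim : finrank F g = 4) {v : Fin 4 → g}
    (hv : ∀ i j, B (v i) (v j) = if j = i.rev then 1 else 0) (h01 : ⁅v 0, v 1⁆ = v 1)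
    (h02 : ⁅v 0, v 2⁆ = -v 2) (h12 : ⁅v 1, v 2⁆ = v 3) (hz : v 3 ∈ center F g) :
    IsG4 F g B := by
  obtain ⟨b, hb⟩ := exists_basis_coe_eq_of_witt_family hdim hv
  have hz' := (LieModule.mem_maxTrivSubmodule F g g _).mp hz
  exact ⟨b, by simp [hb, hv, h01, h02, h12, hz']⟩

theorem IsQuadratic.isG4_of_witt_family (hq : IsQuadratic B) [FiniteDimensional F g]
    (hdim : finrank F g = 4) (hab : ¬IsLieAbelian g) {v : Fin 4 → g}
    (hv : ∀ i j, B (v i) (v j) = if j = i.rev then 1 else 0) (hz : v 3 ∈ center F g) :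
    IsG4 F g B := by
  obtain ⟨c, h01, h02, h12⟩ := hq.exists_lie_witt_family hdim hv hz
  have hz' := (LieModule.mem_maxTrivSubmodule F g g _).mp hz
  have hc : c ≠ 0 := by
    rintro rfl
    obtain ⟨b, hb⟩ := exists_basis_coe_eq_of_witt_family hdim hv
    refine hab (isLieAbelian_of_lie_basis_eq_zero b fun i j => ?_)
    rw [hb]
    fin_cases i <;> fin_cases j <;>
      simp [h01, h02, h12, hz', ← lie_skew (v 1), ← lie_skew (v 2), ← lie_skew (v 3)]
  refine isG4_of_lie_witt_family (v := ![c⁻¹ • v 0, v 1, v 2, c • v 3]) hdim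
    (fun i j => ?_) ?_ ?_ ?_ (Submodule.smul_mem _ c hz)
  · fin_cases i <;> fin_cases j <;> simp [hv, hc]
  · simp [smul_lie, h01, hc]
  · simp [smul_lie, h02, hc]
  · simp [h12]

end Quadratic

/-- every solvable quadratic Lie algebra of dimension 4 over an algebraically
closed field of characteristic 0 is abelian (i-isomorphic to `F⁴`) or i-isomorphic to the
diamond Lie algebra `g4`. -/
theorem stmt_8 {F : Type*} [Field F] [IsAlgClosed F] [CharZero F]
    {g : Type*} [LieRing g] [LieAlgebra F g] [Module.Finite F g]
    (B : LinearMap.BilinForm F g) (hq : IsQuadratic B)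
    (hsol : LieAlgebra.IsSolvable g) (hdim : finrank F g = 4) :
    (IsLieAbelian g ∧
      ∃ b : Basis (Fin 4) F g, ∀ i j, B (b i) (b j) = if i = j then 1 else 0) ∨
    IsG4 F g B := by
  by_cases hab : IsLieAbelian g
  · exact Or.inl ⟨hab, exists_orthonormal_basis hq.1 hq.2.1 hdim⟩
  obtain ⟨z, hz, hz0, hzz⟩ := hq.exists_isotropic_mem_center hdim.le hab
  obtain ⟨v, rfl, hv⟩ := exists_witt_family hq.1 hq.2.1 hdim hz0 hzz
  exact Or.inr (hq.isG4_of_witt_family hdim hab hv hz)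
end

section
/- For nonzero λ1, λ2 in an algebraically closed field F of characteristic 0, the quadratic Lie algebras g_{6,2}(λ1) and g_{6,2}(λ2) are i-isomorphic if and only if λ2 = λ1, λ2 = -λ1, λ2 = λ1^{-1}, or λ2 = -λ1^{-1}. -/
open LinearMap Module

/-- g_{6,2}(λ), basis {X,X1,X2,Z1,Z2,Z} -/
def IsG62 (F : Type*) [Field F] (g : Type*) [LieRing g] [LieAlgebra F g]
    (B : LinearMap.BilinForm F g) (lam : F) : Prop :=
  ∃ b : Basis (Fin 6) F g,
    (⁅b 0, b 1⁆ = b 1) ∧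
    (⁅b 0, b 2⁆ = lam • b 2) ∧
    (⁅b 0, b 3⁆ = -(b 3)) ∧
    (⁅b 0, b 4⁆ = -(lam • b 4)) ∧
    (⁅b 0, b 5⁆ = 0) ∧
    (⁅b 1, b 2⁆ = 0) ∧
    (⁅b 1, b 3⁆ = b 5) ∧
    (⁅b 1, b 4⁆ = 0) ∧
    (⁅b 1, b 5⁆ = 0) ∧
    (⁅b 2, b 3⁆ = 0) ∧
    (⁅b 2, b 4⁆ = lam • b 5) ∧
    (⁅b 2, b 5⁆ = 0) ∧
    (⁅b 3, b 4⁆ = 0) ∧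
    (⁅b 3, b 5⁆ = 0) ∧
    (⁅b 4, b 5⁆ = 0) ∧
    (B (b 0) (b 0) = 0) ∧
    (B (b 0) (b 1) = 0) ∧
    (B (b 0) (b 2) = 0) ∧
    (B (b 0) (b 3) = 0) ∧
    (B (b 0) (b 4) = 0) ∧
    (B (b 0) (b 5) = 1) ∧
    (B (b 1) (b 0) = 0) ∧
    (B (b 1) (b 1) = 0) ∧
    (B (b 1) (b 2) = 0) ∧
    (B (b 1) (b 3) = 1) ∧
    (B (b 1) (b 4) = 0) ∧
    (B (b 1) (b 5) = 0) ∧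
    (B (b 2) (b 0) = 0) ∧
    (B (b 2) (b 1) = 0) ∧
    (B (b 2) (b 2) = 0) ∧
    (B (b 2) (b 3) = 0) ∧
    (B (b 2) (b 4) = 1) ∧
    (B (b 2) (b 5) = 0) ∧
    (B (b 3) (b 0) = 0) ∧
    (B (b 3) (b 1) = 1) ∧
    (B (b 3) (b 2) = 0) ∧
    (B (b 3) (b 3) = 0) ∧
    (B (b 3) (b 4) = 0) ∧
    (B (b 3) (b 5) = 0) ∧
    (B (b 4) (b 0) = 0) ∧
    (B (b 4) (b 1) = 0) ∧
    (B (b 4) (b 2) = 1) ∧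
    (B (b 4) (b 3) = 0) ∧
    (B (b 4) (b 4) = 0) ∧
    (B (b 4) (b 5) = 0) ∧
    (B (b 5) (b 0) = 1) ∧
    (B (b 5) (b 1) = 0) ∧
    (B (b 5) (b 2) = 0) ∧
    (B (b 5) (b 3) = 0) ∧
    (B (b 5) (b 4) = 0) ∧
    (B (b 5) (b 5) = 0)

/-! An i-isomorphism is in particular an isomorphism of Lie algebras, so it preserves
`tr (ad x)²` and `tr (ad x)⁴`. In a `g_{6,2}(λ)` basis `ad x` is triangular with diagonal
`a • (0, 1, λ, -1, -λ, 0)`, where `a` is the `X`-coordinate of `x`, so these traces are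
`2 (1 + λ²) a²` and `2 (1 + λ⁴) a⁴`. Comparing them at `x = X` of `g_{6,2}(λ₁)` and
eliminating `a` leaves `(λ₂² - λ₁²) ((λ₁ λ₂)² - 1) = 0`.

Conversely, exchanging `X₂` and `Z₂` turns a `g_{6,2}(λ)` basis into a `g_{6,2}(-λ)` basis,
and exchanging `X₁ ↔ X₂`, `Z₁ ↔ Z₂` while rescaling `X` by `λ⁻¹` and `Z` by `λ` gives a
`g_{6,2}(λ⁻¹)` basis; two algebras with `g_{6,2}(λ)` bases for the same `λ` are i-isomorphic
by matching the bases. -/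

section BasisCriteria

variable {F ι g₁ g₂ : Type*} [Field F] [LieRing g₁] [LieAlgebra F g₁] [LieRing g₂]
  [LieAlgebra F g₂]

lemma LinearMap.map_lie_of_basis (A : g₁ →ₗ[F] g₂) (b : Basis ι F g₁)
    (h : ∀ i j, A ⁅b i, b j⁆ = ⁅A (b i), A (b j)⁆) (x y : g₁) :
    A ⁅x, y⁆ = ⁅A x, A y⁆ := by
  have hext : (LieAlgebra.ad F g₁ : g₁ →ₗ[F] Module.End F g₁).compr₂ A =
      (LieAlgebra.ad F g₂ : g₂ →ₗ[F] Module.End F g₂).compl₁₂ A A :=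
    b.ext fun i => b.ext fun j => h i j
  exact congr($hext x y)

lemma IIsom.of_basis {B₁ : LinearMap.BilinForm F g₁} {B₂ : LinearMap.BilinForm F g₂}
    (A : g₁ ≃ₗ[F] g₂) (b : Basis ι F g₁)
    (hlie : ∀ i j, A ⁅b i, b j⁆ = ⁅A (b i), A (b j)⁆)
    (hB : ∀ i j, B₂ (A (b i)) (A (b j)) = B₁ (b i) (b j)) : IIsom F B₁ B₂ := by
  refine ⟨{ A with map_lie' := fun {x y} => A.toLinearMap.map_lie_of_basis b hlie x y }, ?_⟩
  have hext : B₂.compl₁₂ A.toLinearMap A.toLinearMap = B₁ :=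
    b.ext fun i => b.ext fun j => hB i j
  exact fun x y => congr($hext x y)

lemma LieEquiv.trace_ad_pow (A : g₁ ≃ₗ⁅F⁆ g₂) (x : g₁) (n : ℕ) :
    trace F g₂ (LieAlgebra.ad F g₂ (A x) ^ n) = trace F g₁ (LieAlgebra.ad F g₁ x ^ n) := by
  rw [← LieAlgebra.conj_ad_apply, ← trace_conj' _ A.toLinearEquiv]
  exact congr_arg _ (map_pow A.toLinearEquiv.conjRingEquiv _ n).symm

end BasisCriteria

section G62

variable {F g : Type*} [Field F] [LieRing g] [LieAlgebra F g]

/-- `g62Table lam v i j` is the bracket `⁅v i, v j⁆` of `g_{6,2}(λ)`, where `v` is the basis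
`(X, X₁, X₂, Z₁, Z₂, Z)`. -/
def g62Table {M : Type*} [AddCommGroup M] [Module F M] (lam : F) (v : Fin 6 → M) :
    Fin 6 → Fin 6 → M :=
  ![![0, v 1, lam • v 2, -v 3, -(lam • v 4), 0],
    ![-v 1, 0, 0, v 5, 0, 0],
    ![-(lam • v 2), 0, 0, 0, lam • v 5, 0],
    ![v 3, -v 5, 0, 0, 0, 0],
    ![lam • v 4, 0, -(lam • v 5), 0, 0, 0],
    ![0, 0, 0, 0, 0, 0]]

def g62Gram : Matrix (Fin 6) (Fin 6) F :=
  !![0, 0, 0, 0, 0, 1;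
     0, 0, 0, 1, 0, 0;
     0, 0, 0, 0, 1, 0;
     0, 1, 0, 0, 0, 0;
     0, 0, 1, 0, 0, 0;
     1, 0, 0, 0, 0, 0]

def IsG62Basis (B : LinearMap.BilinForm F g) (lam : F) (b : Basis (Fin 6) F g) : Prop :=
  (∀ i j, ⁅b i, b j⁆ = g62Table lam b i j) ∧ ∀ i j, B (b i) (b j) = g62Gram i j

lemma isG62_iff {B : LinearMap.BilinForm F g} {lam : F} :
    IsG62 F g B lam ↔ ∃ b, IsG62Basis B lam b := by
  constructor
  · rintro ⟨b, h01, h02, h03, h04, h05, h12, h13, h14, h15, h23, h24, h25, h34, h35, h45, hB⟩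
    -- the side condition `j < i` keeps `simp` from rewriting back and forth
    have hskew : ∀ i j : Fin 6, j < i → ⁅b i, b j⁆ = -⁅b j, b i⁆ :=
      fun i j _ => (lie_skew _ _).symm
    refine ⟨b, fun i j => ?_, fun i j => ?_⟩
    · fin_cases i <;> fin_cases j <;> simp [g62Table, *]
    · revert i j
      simpa [Fin.forall_fin_succ, g62Gram, and_assoc] using hB
  · rintro ⟨b, hlie, hB⟩
    exact ⟨b, by simp [hlie, hB, g62Table, g62Gram]⟩

lemma map_g62Table {M N : Type*} [AddCommGroup M] [Module F M] [AddCommGroup N] [Module F N]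
    (A : M →ₗ[F] N) (lam : F) (v : Fin 6 → M) (i j : Fin 6) :
    A (g62Table lam v i j) = g62Table lam (A ∘ v) i j := by
  fin_cases i <;> fin_cases j <;> simp [g62Table]

def g62AdMatrix (lam : F) (a : Fin 6 → F) : Matrix (Fin 6) (Fin 6) F :=
  !![0, 0, 0, 0, 0, 0;
     -a 1, a 0, 0, 0, 0, 0;
     -(lam * a 2), 0, lam * a 0, 0, 0, 0;
     a 3, 0, 0, -a 0, 0, 0;
     lam * a 4, 0, 0, 0, -(lam * a 0), 0;
     0, -a 3, -(lam * a 4), a 1, lam * a 2, 0]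

lemma trace_g62AdMatrix_sq (lam : F) (a : Fin 6 → F) :
    (g62AdMatrix lam a ^ 2).trace = 2 * (1 + lam ^ 2) * a 0 ^ 2 := by
  simp only [g62AdMatrix, sq, Matrix.trace, Matrix.diag_apply, Matrix.mul_apply, Fin.sum_univ_six,
    Matrix.of_apply, Matrix.cons_val', Matrix.cons_val, Matrix.cons_val_fin_one]
  ring

lemma trace_g62AdMatrix_pow_four (lam : F) (a : Fin 6 → F) :
    (g62AdMatrix lam a ^ 4).trace = 2 * (1 + lam ^ 4) * a 0 ^ 4 := by
  rw [show 4 = 2 * 2 from rfl, pow_mul]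
  simp only [g62AdMatrix, sq, Matrix.trace, Matrix.diag_apply, Matrix.mul_apply, Fin.sum_univ_six,
    Matrix.of_apply, Matrix.cons_val', Matrix.cons_val, Matrix.cons_val_fin_one]
  ring

namespace IsG62Basis

variable {B : LinearMap.BilinForm F g} {lam : F} {b : Basis (Fin 6) F g}

lemma toMatrix_ad (hb : IsG62Basis B lam b) (x : g) :
    toMatrix b b (LieAlgebra.ad F g x) = g62AdMatrix lam (b.repr x) := by
  obtain ⟨a, rfl⟩ : ∃ a : Fin 6 → F, ∑ k, a k • b k = x := ⟨_, b.sum_repr x⟩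
  ext i j
  rw [toMatrix_apply, LieAlgebra.ad_apply, b.repr_sum_self]
  fin_cases j <;> fin_cases i <;>
    simp [g62AdMatrix, g62Table, Fin.sum_univ_six, smul_lie, hb.1, mul_comm]

lemma trace_ad_sq (hb : IsG62Basis B lam b) (x : g) :
    trace F g (LieAlgebra.ad F g x ^ 2) = 2 * (1 + lam ^ 2) * b.repr x 0 ^ 2 := by
  rw [trace_eq_matrix_trace F b, ← toMatrix_pow, hb.toMatrix_ad, trace_g62AdMatrix_sq]

lemma trace_ad_pow_four (hb : IsG62Basis B lam b) (x : g) :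
    trace F g (LieAlgebra.ad F g x ^ 4) = 2 * (1 + lam ^ 4) * b.repr x 0 ^ 4 := by
  rw [trace_eq_matrix_trace F b, ← toMatrix_pow, hb.toMatrix_ad, trace_g62AdMatrix_pow_four]

lemma iIsom {g₂ : Type*} [LieRing g₂] [LieAlgebra F g₂] {B₂ : LinearMap.BilinForm F g₂}
    {c : Basis (Fin 6) F g₂} (hb : IsG62Basis B lam b) (hc : IsG62Basis B₂ lam c) :
    IIsom F B B₂ := by
  set A := b.equiv c (Equiv.refl _)
  have hA : ∀ i, A (b i) = c i := fun i => by simp [A]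
  refine IIsom.of_basis A b (fun i j => ?_) (fun i j => ?_)
  · rw [hA, hA, hb.1, hc.1, ← LinearEquiv.coe_coe, map_g62Table]
    congr
    exact funext hA
  · rw [hA, hA, hb.2, hc.2]

lemma reindex_swap (hb : IsG62Basis B lam b) :
    IsG62Basis B (-lam) (b.reindex (Equiv.swap 2 4)) := by
  constructor <;> intro i j <;> fin_cases i <;> fin_cases j <;>
    simp [Basis.reindex_apply, Equiv.swap_apply_of_ne_of_ne, hb.1, hb.2, g62Table, g62Gram]

lemma exists_inv (hb : IsG62Basis B lam b) (hlam : lam ≠ 0) :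
    ∃ c : Basis (Fin 6) F g, IsG62Basis B lam⁻¹ c := by
  have hw : ∀ i, IsUnit (![lam⁻¹, 1, 1, 1, 1, lam] i) := by
    intro i; fin_cases i <;> simp [hlam]
  refine ⟨(b.isUnitSMul hw).reindex ((Equiv.swap 1 2).trans (Equiv.swap 3 4)), ?_, ?_⟩ <;>
    intro i j <;> fin_cases i <;> fin_cases j <;>
    simp [Basis.reindex_apply, Equiv.swap_apply_of_ne_of_ne, Basis.isUnitSMul_apply, smul_lie,
      lie_smul, smul_smul, hb.1, hb.2, g62Table, g62Gram, hlam]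

end IsG62Basis

namespace IsG62

variable {B : LinearMap.BilinForm F g} {lam : F}

lemma neg (h : IsG62 F g B lam) : IsG62 F g B (-lam) := by
  obtain ⟨b, hb⟩ := isG62_iff.mp h
  exact isG62_iff.mpr ⟨_, hb.reindex_swap⟩

lemma inv (h : IsG62 F g B lam) : IsG62 F g B lam⁻¹ := by
  rcases eq_or_ne lam 0 with rfl | hlam
  · rwa [inv_zero]
  obtain ⟨b, hb⟩ := isG62_iff.mp h
  exact isG62_iff.mpr (hb.exists_inv hlam)

lemma iIsom {g₂ : Type*} [LieRing g₂] [LieAlgebra F g₂] {B₂ : LinearMap.BilinForm F g₂}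
    (h₁ : IsG62 F g B lam) (h₂ : IsG62 F g₂ B₂ lam) : IIsom F B B₂ := by
  obtain ⟨b, hb⟩ := isG62_iff.mp h₁
  obtain ⟨c, hc⟩ := isG62_iff.mp h₂
  exact hb.iIsom hc

end IsG62

end G62

lemma eq_or_eq_neg_or_eq_inv_or_eq_neg_inv_of_one_add_pow {F : Type*} [Field F] [CharZero F]
    {a b t : F} (h₂ : 1 + a ^ 2 = (1 + b ^ 2) * t ^ 2) (h₄ : 1 + a ^ 4 = (1 + b ^ 4) * t ^ 4) :
    b = a ∨ b = -a ∨ b = a⁻¹ ∨ b = -a⁻¹ := by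
  have hfactor : (b ^ 2 - a ^ 2) * ((b * a) ^ 2 - 1) = 0 := by
    linear_combination
      (-(1 + b ^ 2) ^ 2 * h₄ + (1 + b ^ 4) * ((1 + b ^ 2) * t ^ 2 + 1 + a ^ 2) * h₂) / 2
  rcases mul_eq_zero.mp hfactor with h | h
  · exact (sq_eq_sq_iff_eq_or_eq_neg.mp (sub_eq_zero.mp h)).imp_right Or.inl
  · rcases sq_eq_one_iff.mp (sub_eq_zero.mp h) with h | h
    · exact Or.inr (Or.inr (Or.inl (eq_inv_of_mul_eq_one_left h)))
    · refine Or.inr (Or.inr (Or.inr (neg_eq_iff_eq_neg.mp (eq_inv_of_mul_eq_one_left ?_))))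
      rw [neg_mul, h, neg_neg]

theorem stmt_11_general {F : Type*} [Field F] [CharZero F]
    {g1 g2 : Type*} [LieRing g1] [LieAlgebra F g1] [LieRing g2] [LieAlgebra F g2]
    (B1 : LinearMap.BilinForm F g1) (B2 : LinearMap.BilinForm F g2)
    (lam1 lam2 : F)
    (hg1 : IsG62 F g1 B1 lam1) (hg2 : IsG62 F g2 B2 lam2) :
    IIsom F B1 B2 ↔
      (lam2 = lam1 ∨ lam2 = -lam1 ∨ lam2 = lam1⁻¹ ∨ lam2 = -lam1⁻¹) := by
  constructor
  · rintro ⟨A, -⟩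
    obtain ⟨b, hb⟩ := isG62_iff.mp hg1
    obtain ⟨c, hc⟩ := isG62_iff.mp hg2
    have h₂ := A.trace_ad_pow (b 0) 2
    have h₄ := A.trace_ad_pow (b 0) 4
    rw [hb.trace_ad_sq, hc.trace_ad_sq] at h₂
    rw [hb.trace_ad_pow_four, hc.trace_ad_pow_four] at h₄
    simp only [Basis.repr_self, Finsupp.single_eq_same, one_pow, mul_one] at h₂ h₄
    refine eq_or_eq_neg_or_eq_inv_or_eq_neg_inv_of_one_add_pow (t := c.repr (A (b 0)) 0) ?_ ?_
    · linear_combination -h₂ / 2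
    · linear_combination -h₄ / 2
  · rintro (rfl | rfl | rfl | rfl)
    · exact hg1.iIsom hg2
    · exact hg1.iIsom (by simpa using hg2.neg)
    · exact hg1.iIsom (by simpa using hg2.inv)
    · exact hg1.iIsom (by simpa using hg2.neg.inv)

/-- `g_{6,2}(λ1)` and `g_{6,2}(λ2)` are i-isomorphic iff
`λ2 = ±λ1` or `λ2 = ±λ1⁻¹`. -/
theorem stmt_11 {F : Type*} [Field F] [IsAlgClosed F] [CharZero F]
    {g1 g2 : Type*} [LieRing g1] [LieAlgebra F g1] [LieRing g2] [LieAlgebra F g2]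
    (B1 : LinearMap.BilinForm F g1) (B2 : LinearMap.BilinForm F g2)
    (lam1 lam2 : F) (h1 : lam1 ≠ 0) (h2 : lam2 ≠ 0)
    (hg1 : IsG62 F g1 B1 lam1) (hg2 : IsG62 F g2 B2 lam2) :
    IIsom F B1 B2 ↔
      (lam2 = lam1 ∨ lam2 = -lam1 ∨ lam2 = lam1⁻¹ ∨ lam2 = -lam1⁻¹) :=
  stmt_11_general B1 B2 lam1 lam2 hg1 hg2
end

section
/- Let (g,B) be a solvable quadratic Lie algebra over a field F of characteristic 0 that has a nonzero isotropic central element Z. Choose X ∈ g isotropic with B(Z,X) = 1, and set h = (F X ⊕ F Z)^⊥. Then: (i) [h,h] ⊆ h ⊕ F Z, so the bracket [Y,Y']_h := p([Y,Y']) (where p : h ⊕ F Z → h is the projection along F Z) together with B_h := B|_{h×h} makes h a solvable quadratic Lie algebra of dimension dim g − 2; (ii) D := p ∘ ad(X)|_h is a skew-symmetric derivation of (h,B_h); and (iii) g is i-isomorphic to the double extension of h by means of D. -/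
open LinearMap Module

universe u v

/-- bundled data of a Lie algebra over `F` together with a bilinear form. -/
structure QuadLieData (F : Type u) [Field F] : Type (max u (v + 1)) where
  carrier : Type v
  [instLieRing : LieRing carrier]
  [instLieAlgebra : LieAlgebra F carrier]
  form : LinearMap.BilinForm F carrier

attribute [instance] QuadLieData.instLieRing QuadLieData.instLieAlgebra

/-!
Because `Z` is central and `B` is invariant, `B [x, y] Z = B x [y, Z] = 0`, so `Z^⊥` is an ideal
of `g` containing `[g, g]`, and `F Z` is an ideal of `Z^⊥`. Since `B Z X = 1`, the subspace
`h = (F X ⊕ F Z)^⊥` is a complement of `F Z` in `Z^⊥`, so `h` inherits the Lie algebra structure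
of the solvable quotient `Z^⊥ / F Z`; on `h` its bracket reads `[x, y] - B [x, y] X • Z`.
Invariance also gives `B [X, y] X = B y [X, X] = 0`, so `ad X` preserves `h`, and the component
of `[x, y]` along `Z` is `B [x, y] X = B [X, x] y`, which is the cocycle of the double extension.
-/

section

variable {R L : Type*} [CommRing R] [LieRing L] [LieAlgebra R L]

def LieIdeal.quotientMk (I : LieIdeal R L) : L →ₗ⁅R⁆ L ⧸ I :=
  { LieSubmodule.Quotient.mk' I with map_lie' := rfl }

lemma LieIdeal.quotientMk_surjective (I : LieIdeal R L) : Function.Surjective I.quotientMk :=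
  LieSubmodule.Quotient.surjective_mk' I

def LieAlgebra.centerLine {Z : L} (hZ : Z ∈ LieAlgebra.center R L) : LieIdeal R L where
  toSubmodule := R ∙ Z
  lie_mem {x y} hy := by
    obtain ⟨c, rfl⟩ := Submodule.mem_span_singleton.mp hy
    rw [lie_smul, (LieModule.mem_maxTrivSubmodule R L L Z).mp hZ, smul_zero]
    exact Submodule.zero_mem _

end

section

variable {F L : Type*} [Field F] [LieRing L] [LieAlgebra F L] {B : LinearMap.BilinForm F L}
  {X Z : L}

lemma LieInvariant.lie_apply_self (hB : LieInvariant B) (x y : L) : B ⁅x, y⁆ x = 0 := by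
  rw [← lie_skew, map_neg, LinearMap.neg_apply, hB, lie_self, map_zero, neg_zero]

lemma LieInvariant.lie_apply_eq_neg_apply_lie (hB : LieInvariant B) (x y z : L) :
    B ⁅x, y⁆ z = -B y ⁅x, z⁆ := by
  rw [← lie_skew, map_neg, LinearMap.neg_apply, hB]

lemma LieInvariant.lie_apply_eq_zero_of_mem_center (hB : LieInvariant B)
    (hZ : Z ∈ LieAlgebra.center F L) (x y : L) : B ⁅x, y⁆ Z = 0 := by
  rw [hB, (LieModule.mem_maxTrivSubmodule F L L Z).mp hZ, map_zero]

def LieInvariant.orthogonalCenterIdeal (hB : LieInvariant B) (hZ : Z ∈ LieAlgebra.center F L) :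
    LieIdeal F L where
  toSubmodule := LinearMap.ker (B.flip Z)
  lie_mem {x y} _ := hB.lie_apply_eq_zero_of_mem_center hZ x y

def LieInvariant.orthogonalCenterLine (hB : LieInvariant B) (hZ : Z ∈ LieAlgebra.center F L) :
    LieIdeal F (hB.orthogonalCenterIdeal hZ) :=
  (LieAlgebra.centerLine hZ).comap (hB.orthogonalCenterIdeal hZ).incl

def orthogonalPair (B : LinearMap.BilinForm F L) (X Z : L) : Submodule F L :=
  LinearMap.ker (B.flip X) ⊓ LinearMap.ker (B.flip Z)

@[simp]
lemma mem_orthogonalPair {y : L} : y ∈ orthogonalPair B X Z ↔ B y X = 0 ∧ B y Z = 0 := by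
  simp [orthogonalPair]

lemma sub_smul_mem_orthogonalPair (hZZ : B Z Z = 0) (hZX : B Z X = 1) {y : L} (hy : B y Z = 0) :
    y - B y X • Z ∈ orthogonalPair B X Z := by
  simp [hy, hZZ, hZX]

lemma sub_sub_mem_orthogonalPair (hXX : B X X = 0) (hZZ : B Z Z = 0) (hZX : B Z X = 1)
    (hXZ : B X Z = 1) (v : L) : v - B v Z • X - B v X • Z ∈ orthogonalPair B X Z := by
  simp [hXX, hZZ, hZX, hXZ]

lemma finrank_orthogonalPair [FiniteDimensional F L] (hXX : B X X = 0) (hZZ : B Z Z = 0)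
    (hZX : B Z X = 1) (hXZ : B X Z = 1) :
    finrank F (orthogonalPair B X Z) = finrank F L - 2 := by
  let l : L →ₗ[F] F × F := (B.flip X).prod (B.flip Z)
  have hker : LinearMap.ker l = orthogonalPair B X Z := by
    ext y
    simp [l]
  have hsurj : Function.Surjective l := fun ⟨a, b⟩ =>
    ⟨a • Z + b • X, by simp [l, hZX, hZZ, hXX, hXZ]⟩
  have h := l.finrank_range_add_finrank_ker
  rw [LinearMap.range_eq_top.mpr hsurj, hker, finrank_top, Module.finrank_prod,
    Module.finrank_self] at h
  omega

lemma nondegenerate_restrict_orthogonalPair (hnd : B.Nondegenerate) (hsymm : BilinSymm B)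
    (hXX : B X X = 0) (hZZ : B Z Z = 0) (hZX : B Z X = 1) :
    (B.restrict (orthogonalPair B X Z)).Nondegenerate := by
  have hXZ : B X Z = 1 := by rw [hsymm]; exact hZX
  have hleft : (B.restrict (orthogonalPair B X Z)).SeparatingLeft := fun x hx => by
    ext
    refine hnd.1 x fun v => ?_
    have := hx ⟨_, sub_sub_mem_orthogonalPair hXX hZZ hZX hXZ v⟩
    simpa [(mem_orthogonalPair.mp x.2).1, (mem_orthogonalPair.mp x.2).2] using this
  exact ⟨hleft, fun y hy => hleft y fun x => by
    simpa only [LinearMap.BilinForm.restrict_apply, LinearMap.domRestrict_apply, hsymm y]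
      using hy x⟩

variable (hB : LieInvariant B) (hZ : Z ∈ LieAlgebra.center F L)

def orthogonalPairAd : orthogonalPair B X Z →ₗ[F] orthogonalPair B X Z :=
  (LieAlgebra.ad F L X).restrict fun w _ =>
    mem_orthogonalPair.mpr ⟨hB.lie_apply_self X w, hB.lie_apply_eq_zero_of_mem_center hZ X w⟩

lemma coe_orthogonalPairAd (w : orthogonalPair B X Z) :
    (orthogonalPairAd hB hZ w : L) = ⁅X, (w : L)⁆ :=
  rfl

def orthogonalPairToQuotient :
    orthogonalPair B X Z →ₗ[F] hB.orthogonalCenterIdeal hZ ⧸ hB.orthogonalCenterLine hZ :=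
  (hB.orthogonalCenterLine hZ).quotientMk.toLinearMap ∘ₗ
    Submodule.inclusion (fun _ hy => (mem_orthogonalPair.mp hy).2)

lemma orthogonalPairToQuotient_sub_smul (hZZ : B Z Z = 0) (hZX : B Z X = 1)
    (y : hB.orthogonalCenterIdeal hZ) :
    orthogonalPairToQuotient hB hZ ⟨y - B y X • Z, sub_smul_mem_orthogonalPair hZZ hZX y.2⟩ =
      (hB.orthogonalCenterLine hZ).quotientMk y := by
  rw [← sub_eq_zero, orthogonalPairToQuotient, LinearMap.comp_apply, LieHom.coe_toLinearMap,
    ← map_sub]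
  refine (LieSubmodule.Quotient.mk_eq_zero' (N := hB.orthogonalCenterLine hZ)).mpr ?_
  exact Submodule.mem_span_singleton.mpr
    ⟨-B y X, show -B y X • Z = ((y : L) - B y X • Z) - y by rw [neg_smul]; abel⟩

lemma orthogonalPairToQuotient_bijective (hZZ : B Z Z = 0) (hZX : B Z X = 1) :
    Function.Bijective (orthogonalPairToQuotient (X := X) hB hZ) := by
  constructor
  · refine (injective_iff_map_eq_zero _).mpr fun w hw => ?_
    obtain ⟨c, hc⟩ := Submodule.mem_span_singleton.mp
      ((LieSubmodule.Quotient.mk_eq_zero' (N := hB.orthogonalCenterLine hZ)).mp hw)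
    replace hc : c • Z = w := hc
    have hc0 : c = 0 := by simpa [← hc, hZX] using (mem_orthogonalPair.mp w.2).1
    ext
    simp [← hc, hc0]
  · intro q
    obtain ⟨y, rfl⟩ := (hB.orthogonalCenterLine hZ).quotientMk_surjective q
    exact ⟨_, orthogonalPairToQuotient_sub_smul hB hZ hZZ hZX y⟩

variable (hZZ : B Z Z = 0) (hZX : B Z X = 1)

noncomputable def orthogonalPairEquiv :
    orthogonalPair B X Z ≃ₗ[F] hB.orthogonalCenterIdeal hZ ⧸ hB.orthogonalCenterLine hZ :=
  LinearEquiv.ofBijective _ (orthogonalPairToQuotient_bijective hB hZ hZZ hZX)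

noncomputable abbrev orthogonalPairLieRing : LieRing (orthogonalPair B X Z) :=
  (orthogonalPairEquiv hB hZ hZZ hZX).toAddEquiv.lieRing

noncomputable abbrev orthogonalPairLieAlgebra :
    letI := orthogonalPairLieRing hB hZ hZZ hZX
    LieAlgebra F (orthogonalPair B X Z) :=
  (orthogonalPairEquiv hB hZ hZZ hZX).lieAlgebra

lemma coe_orthogonalPair_lie (x y : orthogonalPair B X Z) :
    letI := orthogonalPairLieRing hB hZ hZZ hZX
    ((⁅x, y⁆ : orthogonalPair B X Z) : L) = ⁅(x : L), (y : L)⁆ - B ⁅(x : L), (y : L)⁆ X • Z := by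
  let _ := orthogonalPairLieRing hB hZ hZZ hZX
  let e := orthogonalPairEquiv hB hZ hZZ hZX
  let xy : hB.orthogonalCenterIdeal hZ := ⟨⁅(x : L), y⁆, hB.lie_apply_eq_zero_of_mem_center hZ x y⟩
  have : e.symm ⁅e x, e y⁆ = ⟨xy - B xy X • Z, sub_smul_mem_orthogonalPair hZZ hZX xy.2⟩ := by
    rw [LinearEquiv.symm_apply_eq]
    exact (orthogonalPairToQuotient_sub_smul hB hZ hZZ hZX xy).symm
  rw [AddEquiv.bracket_def]
  exact congrArg Subtype.val this

lemma orthogonalPair_isSolvable [LieAlgebra.IsSolvable L] :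
    letI := orthogonalPairLieRing hB hZ hZZ hZX
    letI := orthogonalPairLieAlgebra hB hZ hZZ hZX
    LieAlgebra.IsSolvable (orthogonalPair B X Z) := by
  let _ := orthogonalPairLieRing hB hZ hZZ hZX
  let _ := orthogonalPairLieAlgebra hB hZ hZZ hZX
  have : LieAlgebra.IsSolvable (hB.orthogonalCenterIdeal hZ ⧸ hB.orthogonalCenterLine hZ) :=
    (hB.orthogonalCenterLine hZ).quotientMk_surjective.lieAlgebra_isSolvable
  exact (LieAlgebra.solvable_iff_equiv_solvable
    ((orthogonalPairEquiv hB hZ hZZ hZX).lieEquiv F)).mpr this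

lemma lieInvariant_restrict_orthogonalPair (hsymm : BilinSymm B) :
    letI := orthogonalPairLieRing hB hZ hZZ hZX
    letI := orthogonalPairLieAlgebra hB hZ hZZ hZX
    LieInvariant (B.restrict (orthogonalPair B X Z)) := by
  intro x y z
  have hxZ : B x Z = 0 := (mem_orthogonalPair.mp x.2).2
  have hZz : B Z z = 0 := by rw [hsymm]; exact (mem_orthogonalPair.mp z.2).2
  simp only [LinearMap.BilinForm.restrict_apply, LinearMap.domRestrict_apply,
    coe_orthogonalPair_lie, map_sub, map_smul, LinearMap.sub_apply, LinearMap.smul_apply, hxZ, hZz,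
    smul_zero, sub_zero]
  exact hB x y z

lemma isSkewDerivation_orthogonalPairAd :
    letI := orthogonalPairLieRing hB hZ hZZ hZX
    letI := orthogonalPairLieAlgebra hB hZ hZZ hZX
    IsSkewDerivation (B.restrict (orthogonalPair B X Z)) (orthogonalPairAd hB hZ) := by
  let _ := orthogonalPairLieRing hB hZ hZZ hZX
  refine ⟨fun x y => Subtype.ext ?_, fun x y => hB.lie_apply_eq_neg_apply_lie X x y⟩
  have hZ' : ∀ v : L, ⁅v, Z⁆ = 0 := (LieModule.mem_maxTrivSubmodule F L L Z).mp hZ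
  have hsum : B ⁅⁅X, (x : L)⁆, (y : L)⁆ X + B ⁅(x : L), ⁅X, (y : L)⁆⁆ X = 0 := by
    rw [← LinearMap.add_apply, ← map_add, ← leibniz_lie, hB.lie_apply_self]
  rw [Submodule.coe_add, coe_orthogonalPairAd, coe_orthogonalPair_lie, coe_orthogonalPair_lie,
    coe_orthogonalPair_lie, coe_orthogonalPairAd, coe_orthogonalPairAd, lie_sub, lie_smul, hZ',
    smul_zero, sub_zero, leibniz_lie, sub_add_sub_comm, ← add_smul, hsum, zero_smul, sub_zero]

lemma lie_eq_coe_lie_add_smul (hsymm : BilinSymm B) (x y : orthogonalPair B X Z) :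
    letI := orthogonalPairLieRing hB hZ hZZ hZX
    ⁅(x : L), (y : L)⁆ =
      ((⁅x, y⁆ : orthogonalPair B X Z) : L) + B.restrict _ (orthogonalPairAd hB hZ x) y • Z := by
  rw [coe_orthogonalPair_lie, LinearMap.BilinForm.restrict_apply, LinearMap.domRestrict_apply,
    coe_orthogonalPairAd, hB X, hsymm X, sub_add_cancel]

end

theorem stmt_14_general {F : Type u} [Field F] {g : Type v} [LieRing g]
    [LieAlgebra F g] [Module.Finite F g] (B : LinearMap.BilinForm F g)
    (hq : IsQuadratic B) (hsol : LieAlgebra.IsSolvable g)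
    (Z X : g) (hZcentral : Z ∈ LieAlgebra.center F g)
    (hZiso : B Z Z = 0) (hXiso : B X X = 0) (hZX : B Z X = 1) :
    ∃ (hd : QuadLieData.{u, v} F) (D : hd.carrier →ₗ[F] hd.carrier)
      (ι : hd.carrier →ₗ[F] g),
      IsQuadratic hd.form ∧
      LieAlgebra.IsSolvable hd.carrier ∧
      Module.Finite F hd.carrier ∧
      finrank F hd.carrier = finrank F g - 2 ∧
      IsSkewDerivation hd.form D ∧
      Set.range (⇑ι) = {y : g | B y X = 0 ∧ B y Z = 0} ∧
      IsDoubleExtension hd.form B D ι X Z := by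
  obtain ⟨hnd, hsymm, hB⟩ := hq
  have hXZ : B X Z = 1 := by rw [hsymm]; exact hZX
  let _ := orthogonalPairLieRing hB hZcentral hZiso hZX
  let _ := orthogonalPairLieAlgebra hB hZcentral hZiso hZX
  refine ⟨⟨orthogonalPair B X Z, B.restrict _⟩, orthogonalPairAd hB hZcentral,
    (orthogonalPair B X Z).subtype,
    ⟨nondegenerate_restrict_orthogonalPair hnd hsymm hXiso hZiso hZX, fun x y => hsymm x y,
      lieInvariant_restrict_orthogonalPair hB hZcentral hZiso hZX hsymm⟩,
    orthogonalPair_isSolvable hB hZcentral hZiso hZX, inferInstance,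
    finrank_orthogonalPair hXiso hZiso hZX hXZ,
    isSkewDerivation_orthogonalPairAd hB hZcentral hZiso hZX, by ext; simp, ?_⟩
  exact
    { inj := Subtype.val_injective
      spanning := fun v =>
        ⟨⟨_, sub_sub_mem_orthogonalPair hXiso hZiso hZX hXZ v⟩, B v Z, B v X, by
          simp only [Submodule.subtype_apply]; abel⟩
      bracket_h := lie_eq_coe_lie_add_smul hB hZcentral hZiso hZX hsymm
      bracket_e := fun _ => rfl
      bracket_f := fun v => by
        rw [← lie_skew, (LieModule.mem_maxTrivSubmodule F g g Z).mp hZcentral, neg_zero]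
      form_h := fun _ _ => rfl
      form_he := fun x => (mem_orthogonalPair.mp x.2).1
      form_hf := fun x => (mem_orthogonalPair.mp x.2).2
      form_ee := hXiso
      form_ff := hZiso
      form_ef := hXZ }

/-- a solvable quadratic Lie algebra `(g,B)` with a nonzero isotropic central
element `Z`, and `X` isotropic with `B(Z,X) = 1`, is a double extension of the solvable
quadratic Lie algebra `h = (F X ⊕ F Z)^⊥` (of dimension `dim g − 2`, with bracket the
projection of the bracket of `g` along `F Z`) by means of the skew-symmetric derivation
`D = p ∘ ad(X)|_h`. -/
theorem stmt_14 {F : Type u} [Field F] [CharZero F] {g : Type v} [LieRing g]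
    [LieAlgebra F g] [Module.Finite F g] (B : LinearMap.BilinForm F g)
    (hq : IsQuadratic B) (hsol : LieAlgebra.IsSolvable g)
    (Z X : g) (hZne : Z ≠ 0) (hZcentral : Z ∈ LieAlgebra.center F g)
    (hZiso : B Z Z = 0) (hXiso : B X X = 0) (hZX : B Z X = 1) :
    ∃ (hd : QuadLieData.{u, v} F) (D : hd.carrier →ₗ[F] hd.carrier)
      (ι : hd.carrier →ₗ[F] g),
      IsQuadratic hd.form ∧
      LieAlgebra.IsSolvable hd.carrier ∧
      Module.Finite F hd.carrier ∧
      finrank F hd.carrier = finrank F g - 2 ∧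
      IsSkewDerivation hd.form D ∧
      Set.range (⇑ι) = {y : g | B y X = 0 ∧ B y Z = 0} ∧
      IsDoubleExtension hd.form B D ι X Z :=
  stmt_14_general B hq hsol Z X hZcentral hZiso hXiso hZX
end
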